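/- arXiv:1609.09493 — 6 statements merged into one kernel-verified Lean document; each statement's English description precedes it below -/
import Mathlib

section
/- Characterization of 𝕄₁(P): a kn×kn matrix pencil ℒ(λ) belongs to 𝕄₁(P) with ansatz vector v ∈ ℝ^k (i.e., ℒ(λ)(Φ_k(λ) ⊗ I_n) = v ⊗ P(λ)) if and only if ℒ(λ) = [v⊗I_n, B] · F_Φ^P(λ) for some matrix B ∈ ℝ^{kn×(k−1)n}, where [v⊗I_n, B] denotes the kn×kn matrix whose first n columns form v⊗I_n and whose remaining (k−1)n columns form B. This holds whether P is regular or singular. -/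
open Polynomial Matrix

noncomputable section

/-- `Φ_k(λ) ⊗ I_n` as a `kn × n` polynomial matrix: its `i`-th block row (0-based)
is `φ_{k-1-i}(λ) I_n`. -/
def PhiMat (n k : ℕ) (φ : ℕ → Polynomial ℝ) :
    Matrix (Fin k × Fin n) (Fin n) (Polynomial ℝ) :=
  Matrix.of fun p s => if p.2 = s then φ (k - 1 - p.1.val) else 0

/-- The matrix polynomial `P(λ) = Σ_{i=0}^k P_i φ_i(λ)`. -/
def matP (n k : ℕ) (φ : ℕ → Polynomial ℝ) (Pm : ℕ → Matrix (Fin n) (Fin n) ℝ) :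
    Matrix (Fin n) (Fin n) (Polynomial ℝ) :=
  Matrix.of fun r s => ∑ i ∈ Finset.range (k + 1), C (Pm i r s) * φ i

/-- `v ⊗ Q` as a `kn × n` polynomial matrix. -/
def vKron (n k : ℕ) (v : Fin k → ℝ) (Q : Matrix (Fin n) (Fin n) (Polynomial ℝ)) :
    Matrix (Fin k × Fin n) (Fin n) (Polynomial ℝ) :=
  Matrix.of fun p s => C (v p.1) * Q p.2 s

/-- `v^T ⊗ Q` as an `n × kn` polynomial matrix. -/
def vKronRow (n k : ℕ) (v : Fin k → ℝ) (Q : Matrix (Fin n) (Fin n) (Polynomial ℝ)) :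
    Matrix (Fin n) (Fin k × Fin n) (Polynomial ℝ) :=
  Matrix.of fun s q => C (v q.1) * Q s q.2

/-- A matrix pencil: a matrix polynomial each of whose entries has degree at most `1`. -/
def IsPencil {m m' : Type*} (L : Matrix m m' (Polynomial ℝ)) : Prop :=
  ∀ p q, (L p q).degree ≤ 1

/-- `ℒ(λ) ∈ 𝕄₁(P)` with ansatz vector `v`, i.e. `ℒ(λ)(Φ_k(λ) ⊗ I_n) = v ⊗ P(λ)`. -/
def Ansatz1 (n k : ℕ) (φ : ℕ → Polynomial ℝ) (Pm : ℕ → Matrix (Fin n) (Fin n) ℝ)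
    (L : Matrix (Fin k × Fin n) (Fin k × Fin n) (Polynomial ℝ)) (v : Fin k → ℝ) : Prop :=
  L * PhiMat n k φ = vKron n k v (matP n k φ Pm)

/-- `ℒ(λ) ∈ 𝕄₂(P)` with ansatz vector `w`, i.e. `(Φ_k(λ)^T ⊗ I_n) ℒ(λ) = w^T ⊗ P(λ)`. -/
def Ansatz2 (n k : ℕ) (φ : ℕ → Polynomial ℝ) (Pm : ℕ → Matrix (Fin n) (Fin n) ℝ)
    (L : Matrix (Fin k × Fin n) (Fin k × Fin n) (Polynomial ℝ)) (w : Fin k → ℝ) : Prop :=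
  (PhiMat n k φ)ᵀ * L = vKronRow n k w (matP n k φ Pm)

/-- The anchor pencil `F_Φ^P(λ) = [m_Φ^P(λ); M_Φ(λ)]`. -/
def FPhi (n k : ℕ) (a b c : ℕ → ℝ) (Pm : ℕ → Matrix (Fin n) (Fin n) ℝ) :
    Matrix (Fin k × Fin n) (Fin k × Fin n) (Polynomial ℝ) :=
  Matrix.of fun p q =>
    if p.1.val = 0 then
      -- the block row m_Φ^P(λ)
      if q.1.val = 0 then
        C ((a (k - 1))⁻¹) * (X - C (b (k - 1))) * C (Pm k p.2 q.2) + C (Pm (k - 1) p.2 q.2)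
      else if q.1.val = 1 then
        C (Pm (k - 2) p.2 q.2) - C (c (k - 1) / a (k - 1)) * C (Pm k p.2 q.2)
      else
        C (Pm (k - 1 - q.1.val) p.2 q.2)
    else
      -- the block rows M_Φ(λ) = M_Φ^⋆(λ) ⊗ I_n
      (if q.1.val + 1 = p.1.val then -C (a (k - 1 - p.1.val))
       else if q.1.val = p.1.val then X - C (b (k - 1 - p.1.val))
       else if q.1.val = p.1.val + 1 then -C (c (k - 1 - p.1.val))
       else 0) * (if p.2 = q.2 then 1 else 0)

/-- The `kn × kn` real matrix `[v ⊗ I_n, B]`: first `n` columns form `v ⊗ I_n`,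
the remaining `(k-1)n` columns form `B`. -/
def extCols (n k : ℕ) (v : Fin k → ℝ)
    (B : Matrix (Fin k × Fin n) (Fin (k - 1) × Fin n) ℝ) :
    Matrix (Fin k × Fin n) (Fin k × Fin n) ℝ :=
  Matrix.of fun p q =>
    if h : q.1.val = 0 then (if p.2 = q.2 then v p.1 else 0)
    else B p (⟨q.1.val - 1, by have := q.1.isLt; omega⟩, q.2)

/-- The `kn × kn` real matrix `[w^T ⊗ I_n; B]`: first `n` rows form `w^T ⊗ I_n`,
the remaining `(k-1)n` rows form `B`. -/
def extRows (n k : ℕ) (w : Fin k → ℝ)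
    (B : Matrix (Fin (k - 1) × Fin n) (Fin k × Fin n) ℝ) :
    Matrix (Fin k × Fin n) (Fin k × Fin n) ℝ :=
  Matrix.of fun p q =>
    if h : p.1.val = 0 then (if p.2 = q.2 then w q.1 else 0)
    else B (⟨p.1.val - 1, by have := p.1.isLt; omega⟩, p.2) q

/-- A real matrix viewed as a constant matrix polynomial. -/
def liftC {m m' : Type*} (A : Matrix m m' ℝ) : Matrix m m' (Polynomial ℝ) :=
  A.map C

/-- Block transpose of a matrix consisting of `n × n` blocks: block `(i,j)` of `A^𝓑`
is block `(j,i)` of `A`. -/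
def blockTr {n k1 k2 : ℕ} {R : Type*} (A : Matrix (Fin k1 × Fin n) (Fin k2 × Fin n) R) :
    Matrix (Fin k2 × Fin n) (Fin k1 × Fin n) R :=
  Matrix.of fun p q => A (q.1, p.2) (p.1, q.2)

/-- `rev_d Q(λ) = λ^d Q(1/λ)`, entrywise reversal of a matrix polynomial of degree at most `d`. -/
def revMat {m m' : Type*} (d : ℕ) (L : Matrix m m' (Polynomial ℝ)) :
    Matrix m m' (Polynomial ℝ) :=
  Matrix.of fun p q => (L p q).reflect d

/-- Evaluation of a real matrix polynomial at a complex number. -/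
def evalC {m m' : Type*} (α : ℂ) (L : Matrix m m' (Polynomial ℝ)) : Matrix m m' ℂ :=
  Matrix.of fun p q => aeval α (L p q)

/-- A matrix polynomial viewed as a matrix over the field `ℝ(λ)` of rational functions. -/
def liftRat {m m' : Type*} (L : Matrix m m' (Polynomial ℝ)) : Matrix m m' (RatFunc ℝ) :=
  L.map (algebraMap (Polynomial ℝ) (RatFunc ℝ))

/-- `v ⊗ I_n` as a `kn × n` complex matrix. -/
def vKronC (n k : ℕ) (v : Fin k → ℝ) : Matrix (Fin k × Fin n) (Fin n) ℂ :=
  Matrix.of fun p s => if p.2 = s then (v p.1 : ℂ) else 0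

/-- `v ⊗ I_n` as a `kn × n` matrix over `ℝ(λ)`. -/
def vKronRat (n k : ℕ) (v : Fin k → ℝ) : Matrix (Fin k × Fin n) (Fin n) (RatFunc ℝ) :=
  Matrix.of fun p s => if p.2 = s then RatFunc.C (v p.1) else 0

/-- The pencil `Xm λ + Ym` as a matrix polynomial. -/
def pencilPoly {m : Type*} (Xm Ym : Matrix m m ℝ) : Matrix m m (Polynomial ℝ) :=
  Matrix.of fun p q => C (Xm p q) * X + C (Ym p q)

/-- `diag(P(λ), I_{(k-1)n})` as a `kn × kn` matrix polynomial. -/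
def diagPI (n k : ℕ) (Pp : Matrix (Fin n) (Fin n) (Polynomial ℝ)) :
    Matrix (Fin k × Fin n) (Fin k × Fin n) (Polynomial ℝ) :=
  Matrix.of fun p q =>
    if p.1.val = 0 ∧ q.1.val = 0 then Pp p.2 q.2 else if p = q then 1 else 0

/-- `ℒ(λ)` is a linearization of `P(λ)`: there are `U(λ), V(λ)` with nonzero real constant
determinants such that `U(λ)ℒ(λ)V(λ) = diag(P(λ), I_{(k-1)n})`. -/
def IsLinearization (n k : ℕ)
    (L : Matrix (Fin k × Fin n) (Fin k × Fin n) (Polynomial ℝ))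
    (Pp : Matrix (Fin n) (Fin n) (Polynomial ℝ)) : Prop :=
  ∃ U V : Matrix (Fin k × Fin n) (Fin k × Fin n) (Polynomial ℝ),
    (∃ cu : ℝ, cu ≠ 0 ∧ U.det = C cu) ∧ (∃ cv : ℝ, cv ≠ 0 ∧ V.det = C cv) ∧
    U * L * V = diagPI n k Pp

/-- `ℒ(λ)` is a strong linearization of `P(λ)` (of degree `k`): it is a linearization and
`rev₁ ℒ(λ)` is a linearization of `rev_k P(λ)`. -/
def IsStrongLin (n k : ℕ)
    (L : Matrix (Fin k × Fin n) (Fin k × Fin n) (Polynomial ℝ))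
    (Pp : Matrix (Fin n) (Fin n) (Polynomial ℝ)) : Prop :=
  IsLinearization n k L Pp ∧ IsLinearization n k (revMat 1 L) (revMat k Pp)


namespace Statement0Aux



lemma deg_phi (a b c : ℕ → ℝ) (φ : ℕ → Polynomial ℝ) (ha : ∀ j, a j ≠ 0)
    (hφ0 : φ 0 = 1)
    (hφ1 : C (a 0) * φ 1 = (X - C (b 0)) * φ 0)
    (hφrec : ∀ j, C (a (j + 1)) * φ (j + 2) =
      (X - C (b (j + 1))) * φ (j + 1) - C (c (j + 1)) * φ j) :
    ∀ j, (φ j).degree = j := by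
  have key : ∀ j, (φ j).degree = j ∧ (φ (j+1)).degree = (j+1 : ℕ) := by
    intro j
    induction j with
    | zero =>
      constructor
      · simp [hφ0]
      · have h1 : C (a 0) * φ 1 = X - C (b 0) := by rw [hφ1, hφ0, mul_one]
        have := congrArg Polynomial.degree h1
        rw [degree_mul, degree_C (ha 0), degree_X_sub_C, zero_add] at this
        exact this
    | succ j ih =>
      refine ⟨ih.2, ?_⟩
      have hrec := hφrec j
      have hd1 : ((X - C (b (j+1))) * φ (j+1)).degree = ((j+2 : ℕ) : WithBot ℕ) := by
        rw [degree_mul, degree_X_sub_C, ih.2]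
        norm_cast; omega
      have hd2 : (C (c (j+1)) * φ j).degree < ((j+2 : ℕ) : WithBot ℕ) := by
        calc (C (c (j+1)) * φ j).degree ≤ 0 + (j : ℕ) := by
              rw [degree_mul, ih.1]
              exact add_le_add degree_C_le le_rfl
          _ < (j+2 : ℕ) := by
              rw [zero_add]
              exact_mod_cast Nat.lt_succ_of_lt (Nat.lt_succ_self j)
      have hsub : ((X - C (b (j+1))) * φ (j+1) - C (c (j+1)) * φ j).degree = ((j+2 : ℕ) : WithBot ℕ) := by
        rw [degree_sub_eq_left_of_degree_lt (by rw [hd1]; exact hd2), hd1]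
      have := congrArg Polynomial.degree hrec
      rw [degree_mul, degree_C (ha (j+1)), zero_add, hsub] at this
      exact_mod_cast this
  exact fun j => (key j).1





/-- Entry of row `t` (0-based), column `j` of `M_Φ^⋆(λ)` for size `K` (i.e. `(K-1) × K`). -/
noncomputable def mrow (a b c : ℕ → ℝ) (K t j : ℕ) : Polynomial ℝ :=
  if j = t then -C (a (K - 2 - t))
  else if j = t + 1 then X - C (b (K - 2 - t))
  else if j = t + 2 then -C (c (K - 2 - t))
  else 0

lemma mrow_deg (a b c : ℕ → ℝ) (K t j : ℕ) : (mrow a b c K t j).degree ≤ 1 := by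
  unfold mrow
  split_ifs
  · rw [degree_neg]; exact le_trans degree_C_le (by norm_num)
  · exact le_of_eq (degree_X_sub_C _)
  · rw [degree_neg]; exact le_trans degree_C_le (by norm_num)
  · simp

lemma mrow_shift (a b c : ℕ → ℝ) (K s j : ℕ) :
    mrow a b c (K + 1) s j = mrow a b c (K + 2) (s + 1) (j + 1) := by
  unfold mrow
  have e1 : K + 2 - 2 - (s + 1) = K + 1 - 2 - s := by omega
  rw [e1]
  split_ifs <;> first | rfl | omega

lemma mrow_eq_zero (a b c : ℕ → ℝ) (K t j : ℕ)
    (h1 : j ≠ t) (h2 : j ≠ t + 1) (h3 : j ≠ t + 2) : mrow a b c K t j = 0 := by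
  unfold mrow
  split_ifs <;> first | rfl | omega

lemma scalar_lemma (a b c : ℕ → ℝ) (φ : ℕ → Polynomial ℝ) (ha : ∀ j, a j ≠ 0)
    (hφ0 : φ 0 = 1)
    (hφ1 : C (a 0) * φ 1 = (X - C (b 0)) * φ 0)
    (hφrec : ∀ j, C (a (j + 1)) * φ (j + 2) =
      (X - C (b (j + 1))) * φ (j + 1) - C (c (j + 1)) * φ j)
    (hdeg : ∀ j, (φ j).degree = j) :
    ∀ K, ∀ d : Fin (K + 1) → Polynomial ℝ, (∀ j, (d j).degree ≤ 1) →
      (∑ j : Fin (K + 1), d j * φ (K - j.val)) = 0 →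
      ∃ bb : Fin K → ℝ, ∀ j : Fin (K + 1),
        d j = ∑ t : Fin K, C (bb t) * mrow a b c (K + 1) t.val j.val := by
  intro K
  induction K with
  | zero =>
    intro d hd hsum
    refine ⟨Fin.elim0, fun j => ?_⟩
    have hj : j = 0 := Fin.ext (by omega)
    rw [hj]
    have h1 : d 0 * φ 0 = 0 := by simpa using hsum
    rw [hφ0, mul_one] at h1
    simp [h1]
  | succ K IH =>
    intro d hd hsum
    have hsum2 : d 0 * φ (K + 1) + ∑ j : Fin (K + 1), d j.succ * φ (K - j.val) = 0 := by
      calc d 0 * φ (K + 1) + ∑ j : Fin (K + 1), d j.succ * φ (K - j.val)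
          = ∑ j : Fin (K + 2), d j * φ (K + 1 - j.val) := by
            conv_rhs => rw [Fin.sum_univ_succ]
            have h0 : K + 1 - ((0 : Fin (K + 2)) : ℕ) = K + 1 := rfl
            rw [h0]
            congr 1
            refine Finset.sum_congr rfl fun j _ => ?_
            have h : K + 1 - ((j.succ : Fin (K + 2)) : ℕ) = K - j.val := by
              rw [Fin.val_succ]; omega
            rw [h]
        _ = 0 := hsum
    have hsum' : d 0 * φ (K + 1) = -∑ j : Fin (K + 1), d j.succ * φ (K - j.val) :=
      eq_neg_of_add_eq_zero_left hsum2
    -- degree bound forces d 0 to be constant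
    have hdegsum : (∑ j : Fin (K + 1), d j.succ * φ (K - j.val)).degree ≤ ((K + 1 : ℕ) : WithBot ℕ) := by
      refine le_trans (Polynomial.degree_sum_le _ _) (Finset.sup_le fun j _ => ?_)
      calc (d j.succ * φ (K - j.val)).degree ≤ 1 + ((K - j.val : ℕ) : WithBot ℕ) := by
            rw [degree_mul, hdeg]
            exact add_le_add (hd _) le_rfl
        _ ≤ ((K + 1 : ℕ) : WithBot ℕ) := by
            rw [show ((1 : WithBot ℕ)) = ((1 : ℕ) : WithBot ℕ) from rfl, ← Nat.cast_add]
            exact Nat.cast_le.mpr (by omega)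
    have hd0deg : (d 0).degree ≤ 0 := by
      by_contra hcon
      push_neg at hcon
      have h1 : (1 : WithBot ℕ) ≤ (d 0).degree := by
        cases hdd : (d 0).degree with
        | bot => rw [hdd] at hcon; exact absurd hcon (by simp)
        | coe m =>
          rw [hdd] at hcon
          have hm : (0 : ℕ) < m := by
            by_contra hm0
            push_neg at hm0
            interval_cases m
            simp at hcon
          rw [show ((1 : WithBot ℕ)) = ((1 : ℕ) : WithBot ℕ) from rfl]
          exact Nat.cast_le.mpr hm
      have h2 : (d 0 * φ (K + 1)).degree ≤ ((K + 1 : ℕ) : WithBot ℕ) := by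
        rw [hsum', degree_neg]; exact hdegsum
      rw [degree_mul, hdeg] at h2
      have h3 := le_trans (add_le_add h1 (le_refl (((K + 1 : ℕ)) : WithBot ℕ))) h2
      rw [show ((1 : WithBot ℕ)) = ((1 : ℕ) : WithBot ℕ) from rfl, ← Nat.cast_add] at h3
      exact absurd (Nat.cast_le.mp h3) (by omega)
    obtain ⟨e, he⟩ : ∃ e : ℝ, d 0 = C e := ⟨(d 0).coeff 0, eq_C_of_degree_le_zero hd0deg⟩
    set b0 : ℝ := -e / a K with hb0
    have hb0a : b0 * a K = -e := by
      rw [hb0]; exact div_mul_cancel₀ _ (ha K)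
    -- the reduced vector d'
    set d' : Fin (K + 1) → Polynomial ℝ :=
      fun t => d t.succ - C b0 * mrow a b c (K + 2) 0 t.succ.val with hd'def
    have hd'deg : ∀ t, (d' t).degree ≤ 1 := by
      intro t
      refine le_trans (degree_sub_le _ _) (max_le (hd _) ?_)
      refine le_trans (degree_mul_le _ _) ?_
      calc (C b0).degree + (mrow a b c (K + 2) 0 t.succ.val).degree ≤ 0 + 1 :=
            add_le_add degree_C_le (mrow_deg a b c _ _ _)
        _ = 1 := by norm_num
    -- the M-row combination identity
    have hMsum : (∑ t : Fin (K + 1), mrow a b c (K + 2) 0 t.succ.val * φ (K - t.val))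
        = C (a K) * φ (K + 1) := by
      match K with
      | 0 =>
        rw [Fin.sum_univ_one]
        have h1 : mrow a b c 2 0 1 = X - C (b 0) := by unfold mrow; norm_num
        rw [show ((Fin.succ 0 : Fin 2) : ℕ) = 1 from rfl, h1]
        rw [show (0 : ℕ) - ((0 : Fin 1) : ℕ) = 0 from rfl]
        exact (hφ1).symm
      | (K' + 1) =>
        have hrec := hφrec K'
        rw [Fin.sum_univ_succ, Fin.sum_univ_succ]
        have hK3 : K' + 3 - 2 = K' + 1 := by omega
        have h1 : mrow a b c (K' + 3) 0 1 = X - C (b (K' + 1)) := by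
          unfold mrow
          norm_num [hK3]
        have h2 : mrow a b c (K' + 3) 0 2 = -C (c (K' + 1)) := by
          unfold mrow
          norm_num [hK3]
        have h3 : ∀ i : Fin K', mrow a b c (K' + 3) 0 (i.val + 1 + 1 + 1) = 0 :=
          fun i => mrow_eq_zero a b c _ _ _ (by omega) (by omega) (by omega)
        simp only [Fin.val_succ, Fin.val_zero, Fin.succ_zero_eq_one, Fin.val_one, h3,
          zero_mul, Finset.sum_const_zero, add_zero]
        norm_num [h1, h2]
        rw [hrec]
        ring
    have hsum'' : (∑ t : Fin (K + 1), d' t * φ (K - t.val)) = 0 := by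
      have expand : ∀ t : Fin (K + 1), d' t * φ (K - t.val)
          = d t.succ * φ (K - t.val)
            - C b0 * (mrow a b c (K + 2) 0 t.succ.val * φ (K - t.val)) := by
        intro t
        simp only [hd'def]
        ring
      rw [Finset.sum_congr rfl fun t _ => expand t, Finset.sum_sub_distrib,
        ← Finset.mul_sum, hMsum]
      have hc : C b0 * C (a K) = -C e := by rw [← C_mul, hb0a, map_neg]
      calc (∑ j : Fin (K + 1), d j.succ * φ (K - j.val)) - C b0 * (C (a K) * φ (K + 1))
          = (∑ j : Fin (K + 1), d j.succ * φ (K - j.val)) - (C b0 * C (a K)) * φ (K + 1) := by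
            ring
        _ = (∑ j : Fin (K + 1), d j.succ * φ (K - j.val)) + C e * φ (K + 1) := by
            rw [hc]; ring
        _ = d 0 * φ (K + 1) + ∑ j : Fin (K + 1), d j.succ * φ (K - j.val) := by
            rw [he]; ring
        _ = 0 := hsum2
    obtain ⟨bb', hbb'⟩ := IH d' hd'deg hsum''
    refine ⟨Fin.cons b0 bb', fun j => ?_⟩
    rw [Fin.sum_univ_succ]
    simp only [Fin.cons_zero, Fin.cons_succ]
    refine Fin.cases ?_ (fun i => ?_) j
    · have hz : ∀ s : Fin K, mrow a b c (K + 2) (s.val + 1) 0 = 0 :=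
        fun s => mrow_eq_zero a b c _ _ _ (by omega) (by omega) (by omega)
      have h00 : mrow a b c (K + 2) 0 0 = -C (a K) := by
        unfold mrow
        norm_num [show K + 2 - 2 = K from by omega]
      simp only [Fin.val_zero, Fin.val_succ, hz, h00, mul_zero, Finset.sum_const_zero, add_zero]
      rw [he, mul_neg, ← C_mul, hb0a, map_neg, neg_neg]
    · have hshift : ∀ s : Fin K, mrow a b c (K + 2) (s.val + 1) (i.val + 1)
          = mrow a b c (K + 1) s.val i.val := fun s => (mrow_shift a b c K s.val i.val).symm
      have hdi : d i.succ = d' i + C b0 * mrow a b c (K + 2) 0 i.succ.val := by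
        simp [hd'def]
      rw [hdi, hbb' i]
      simp only [Fin.val_succ, hshift, Fin.val_zero]
      ring

end Statement0Aux

namespace Statement0Aux

lemma mul_PhiMat_entry (n k : ℕ) (φ : ℕ → Polynomial ℝ)
    (M : Matrix (Fin k × Fin n) (Fin k × Fin n) (Polynomial ℝ))
    (p : Fin k × Fin n) (q : Fin n) :
    (M * PhiMat n k φ) p q = ∑ j : Fin k, M p (j, q) * φ (k - 1 - j.val) := by
  rw [Matrix.mul_apply, Fintype.sum_prod_type]
  refine Finset.sum_congr rfl fun j _ => ?_
  simp [PhiMat, mul_ite, mul_zero]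

lemma mrow_phi_sum (a b c : ℕ → ℝ) (φ : ℕ → Polynomial ℝ)
    (hφ0 : φ 0 = 1)
    (hφ1 : C (a 0) * φ 1 = (X - C (b 0)) * φ 0)
    (hφrec : ∀ j, C (a (j + 1)) * φ (j + 2) =
      (X - C (b (j + 1))) * φ (j + 1) - C (c (j + 1)) * φ j)
    (k t : ℕ) (hk : 2 ≤ k) (ht : t < k - 1) :
    ∑ j : Fin k, mrow a b c k t j.val * φ (k - 1 - j.val) = 0 := by
  have hsplit : ∀ j : ℕ, mrow a b c k t j * φ (k - 1 - j)
      = (if j = t then (-C (a (k - 2 - t))) * φ (k - 1 - j) else 0)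
        + (if j = t + 1 then (X - C (b (k - 2 - t))) * φ (k - 1 - j) else 0)
        + (if j = t + 2 then (-C (c (k - 2 - t))) * φ (k - 1 - j) else 0) := by
    intro j
    unfold mrow
    split_ifs <;> first | ring1 | omega
  rw [Fin.sum_univ_eq_sum_range (fun j => mrow a b c k t j * φ (k - 1 - j)) k]
  rw [Finset.sum_congr rfl fun j _ => hsplit j]
  rw [Finset.sum_add_distrib, Finset.sum_add_distrib,
    Finset.sum_ite_eq' (Finset.range k) t,
    Finset.sum_ite_eq' (Finset.range k) (t + 1),
    Finset.sum_ite_eq' (Finset.range k) (t + 2)]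
  simp only [Finset.mem_range]
  rw [if_pos (by omega : t < k), if_pos (by omega : t + 1 < k)]
  rcases Nat.lt_or_ge (t + 2) k with h | h
  · rw [if_pos h]
    obtain ⟨mm, e1, e2, e3, e4⟩ : ∃ mm, k - 2 - t = mm + 1 ∧ k - 1 - t = mm + 2
        ∧ k - 1 - (t + 1) = mm + 1 ∧ k - 1 - (t + 2) = mm := ⟨k - 3 - t, by omega⟩
    rw [e1, e2, e3, e4]
    linear_combination -hφrec mm
  · rw [if_neg (by omega)]
    have e1 : k - 2 - t = 0 := by omega
    have e2 : k - 1 - t = 1 := by omega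
    have e3 : k - 1 - (t + 1) = 0 := by omega
    rw [e1, e2, e3]
    linear_combination -hφ1

lemma FPhi_pencil (n k : ℕ) (a b c : ℕ → ℝ) (Pm : ℕ → Matrix (Fin n) (Fin n) ℝ)
    (p q : Fin k × Fin n) : ((FPhi n k a b c Pm) p q).degree ≤ 1 := by
  simp only [FPhi, Matrix.of_apply]
  split_ifs <;> compute_degree <;> norm_num

lemma FPhi_lower (n m : ℕ) (a b c : ℕ → ℝ) (Pm : ℕ → Matrix (Fin n) (Fin n) ℝ)
    (p : Fin (m+2) × Fin n) (t : ℕ) (hp : (p.1 : ℕ) = t + 1)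
    (j : Fin (m+2)) (s : Fin n) :
    FPhi n (m+2) a b c Pm p (j, s)
      = mrow a b c (m+2) t j.val * (if p.2 = s then 1 else 0) := by
  have e : m + 2 - 1 - ((p.1 : ℕ)) = m + 2 - 2 - t := by omega
  simp only [FPhi, Matrix.of_apply, mrow, hp]
  rw [show m + 2 - 1 - (t + 1) = m + 2 - 2 - t from by omega]
  split_ifs <;> first | rfl | omega | exact False.elim (by assumption)

lemma anchor_row (n m : ℕ) (a b c : ℕ → ℝ) (φ : ℕ → Polynomial ℝ)
    (Pm : ℕ → Matrix (Fin n) (Fin n) ℝ) (ha : ∀ j, a j ≠ 0)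
    (hφ0 : φ 0 = 1)
    (hφ1 : C (a 0) * φ 1 = (X - C (b 0)) * φ 0)
    (hφrec : ∀ j, C (a (j + 1)) * φ (j + 2) =
      (X - C (b (j + 1))) * φ (j + 1) - C (c (j + 1)) * φ j)
    (p : Fin (m+2) × Fin n) (q : Fin n) :
    ∑ j : Fin (m+2), FPhi n (m+2) a b c Pm p (j, q) * φ (m + 2 - 1 - j.val)
      = if (p.1 : ℕ) = 0 then matP n (m+2) φ Pm p.2 q else 0 := by
  by_cases h0 : (p.1 : ℕ) = 0
  · rw [if_pos h0]
    have hainv : C ((a (m+1))⁻¹) * C (a (m+1)) = 1 := by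
      rw [← C_mul, inv_mul_cancel₀ (ha (m+1)), Polynomial.C_1]
    have hca : C (c (m+1) / a (m+1)) = C ((a (m+1))⁻¹) * C (c (m+1)) := by
      rw [← C_mul, div_eq_mul_inv, mul_comm]
    have hkey : C ((a (m+1))⁻¹) * (X - C (b (m+1))) * φ (m+1)
        = φ (m+2) + C (c (m+1) / a (m+1)) * φ m := by
      linear_combination (-(C ((a (m+1))⁻¹))) * hφrec m + φ (m+2) * hainv - φ m * hca
    set g : ℕ → Polynomial ℝ := fun jj => (if jj = 0 then
              C ((a (m+1))⁻¹) * (X - C (b (m+1))) * C (Pm (m+2) p.2 q) + C (Pm (m+1) p.2 q)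
            else if jj = 1 then
              C (Pm m p.2 q) - C (c (m+1) / a (m+1)) * C (Pm (m+2) p.2 q)
            else C (Pm (m + 1 - jj) p.2 q)) * φ (m + 1 - jj) with hg
    have hF : ∀ j : Fin (m+2), FPhi n (m+2) a b c Pm p (j, q) * φ (m + 2 - 1 - j.val)
        = g j.val := by
      intro j
      simp only [FPhi, Matrix.of_apply, h0, if_true, hg]
      norm_num
    rw [Finset.sum_congr rfl fun j _ => hF j]
    rw [Fin.sum_univ_eq_sum_range g (m+2)]
    rw [Finset.sum_range_succ' _ (m+1), Finset.sum_range_succ' _ m]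
    norm_num
    have hre : ∀ i ∈ Finset.range m, g (i + 1 + 1) = (fun i => C (Pm i p.2 q) * φ i) (m - 1 - i) := by
      intro i hi
      simp only [hg]
      rw [if_neg (by omega), if_neg (by omega)]
      have e : m + 1 - (i + 1 + 1) = m - 1 - i := by omega
      rw [e]
    rw [Finset.sum_congr rfl hre, Finset.sum_range_reflect (fun i => C (Pm i p.2 q) * φ i) m]
    have hg0 : g 0 = (C ((a (m+1))⁻¹) * (X - C (b (m+1))) * C (Pm (m+2) p.2 q)
        + C (Pm (m+1) p.2 q)) * φ (m + 1) := by
      simp only [hg]; norm_num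
    have hg1 : g 1 = (C (Pm m p.2 q) - C (c (m+1) / a (m+1)) * C (Pm (m+2) p.2 q)) * φ m := by
      simp only [hg]; norm_num
    rw [hg0, hg1]
    simp only [matP, Matrix.of_apply]
    rw [Finset.sum_range_succ, Finset.sum_range_succ, Finset.sum_range_succ]
    linear_combination C (Pm (m+2) p.2 q) * hkey
  · rw [if_neg h0]
    obtain ⟨t, ht⟩ : ∃ t, (p.1 : ℕ) = t + 1 := ⟨(p.1 : ℕ) - 1, by omega⟩
    have htlt : t < m + 1 := by have := p.1.isLt; omega
    rw [Finset.sum_congr rfl fun j _ => by rw [FPhi_lower n m a b c Pm p t ht j q]]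
    have : ∑ j : Fin (m+2), mrow a b c (m+2) t j.val * (if p.2 = q then 1 else 0)
          * φ (m + 2 - 1 - j.val)
        = (if p.2 = q then 1 else 0) *
          ∑ j : Fin (m+2), mrow a b c (m+2) t j.val * φ (m + 2 - 1 - j.val) := by
      rw [Finset.mul_sum]
      exact Finset.sum_congr rfl fun j _ => by ring
    rw [this, mrow_phi_sum a b c φ hφ0 hφ1 hφrec (m+2) t (by omega) (by omega), mul_zero]

end Statement0Aux

open Statement0Aux in
theorem statement_0
    (n k : ℕ) (hn : 0 < n) (hk : 2 ≤ k)
    (a b c : ℕ → ℝ) (ha : ∀ j, a j ≠ 0)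
    (φ : ℕ → Polynomial ℝ) (hφ0 : φ 0 = 1)
    (hφ1 : C (a 0) * φ 1 = (X - C (b 0)) * φ 0)
    (hφrec : ∀ j, C (a (j + 1)) * φ (j + 2) =
      (X - C (b (j + 1))) * φ (j + 1) - C (c (j + 1)) * φ j)
    (Pm : ℕ → Matrix (Fin n) (Fin n) ℝ) (hPk : Pm k ≠ 0)
    (L : Matrix (Fin k × Fin n) (Fin k × Fin n) (Polynomial ℝ)) (hL : IsPencil L) (v : Fin k → ℝ) :
    Ansatz1 n k φ Pm L v ↔
      ∃ B : Matrix (Fin k × Fin n) (Fin (k - 1) × Fin n) ℝ,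
        L = liftC (extCols n k v B) * FPhi n k a b c Pm := by
  classical
  obtain ⟨m, rfl⟩ : ∃ m, k = m + 2 := ⟨k - 2, by omega⟩
  have hdeg := deg_phi a b c φ ha hφ0 hφ1 hφrec
  have hFP : FPhi n (m+2) a b c Pm * PhiMat n (m+2) φ
      = Matrix.of (fun (r : Fin (m+2) × Fin n) (q : Fin n) =>
          if (r.1 : ℕ) = 0 then matP n (m+2) φ Pm r.2 q else 0) := by
    ext r q : 1
    rw [mul_PhiMat_entry]
    exact anchor_row n m a b c φ Pm ha hφ0 hφ1 hφrec r q
  constructor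
  · -- forward direction
    intro hA
    have hAe : ∀ (p : Fin (m+2) × Fin n) (q : Fin n),
        ∑ j : Fin (m+2), L p (j, q) * φ (m + 2 - 1 - j.val)
          = C (v p.1) * matP n (m+2) φ Pm p.2 q := by
      intro p q
      have h1 := congrFun (congrFun hA p) q
      rw [mul_PhiMat_entry] at h1
      exact h1
    set d : (Fin (m+2) × Fin n) → Fin n → Fin (m+2) → Polynomial ℝ :=
      fun p s j => L p (j, s) - C (v p.1) * FPhi n (m+2) a b c Pm (0, p.2) (j, s) with hdd
    have hdpencil : ∀ p s j, (d p s j).degree ≤ 1 := by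
      intro p s j
      refine le_trans (degree_sub_le _ _) (max_le (hL _ _) ?_)
      refine le_trans (degree_mul_le _ _) ?_
      calc (C (v p.1)).degree + (FPhi n (m+2) a b c Pm (0, p.2) (j, s)).degree
          ≤ 0 + 1 := add_le_add degree_C_le (FPhi_pencil n (m+2) a b c Pm _ _)
        _ ≤ 1 := by norm_num
    have hdsum : ∀ p s, ∑ j : Fin (m+2), d p s j * φ (m + 1 - j.val) = 0 := by
      intro p s
      have h2 : ∑ j : Fin (m+2), FPhi n (m+2) a b c Pm (0, p.2) (j, s) * φ (m + 2 - 1 - j.val)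
          = matP n (m+2) φ Pm p.2 s := by
        have := anchor_row n m a b c φ Pm ha hφ0 hφ1 hφrec (0, p.2) s
        simpa using this
      have h3 : ∀ j : Fin (m+2), d p s j * φ (m + 1 - j.val)
          = L p (j, s) * φ (m + 2 - 1 - j.val)
            - C (v p.1) * (FPhi n (m+2) a b c Pm (0, p.2) (j, s) * φ (m + 2 - 1 - j.val)) := by
        intro j
        show d p s j * φ (m + 2 - 1 - j.val) = _
        rw [hdd]
        ring
      rw [Finset.sum_congr rfl fun j _ => h3 j, Finset.sum_sub_distrib, ← Finset.mul_sum,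
        hAe p s, h2, sub_self]
    have hex : ∀ p s, ∃ bb : Fin (m+1) → ℝ, ∀ j : Fin (m+2),
        d p s j = ∑ t : Fin (m+1), C (bb t) * mrow a b c (m+2) t.val j.val :=
      fun p s => scalar_lemma a b c φ ha hφ0 hφ1 hφrec hdeg (m+1) (d p s)
        (hdpencil p s) (hdsum p s)
    choose bb hbb using hex
    refine ⟨fun p ts => bb p ts.2 ts.1, ?_⟩
    ext p q : 1
    rw [Matrix.mul_apply, Fintype.sum_prod_type, Fin.sum_univ_succ]
    have h4 : ∀ r2 : Fin n, liftC (extCols n (m+2) v (fun p ts => bb p ts.2 ts.1)) p (0, r2)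
        = if p.2 = r2 then C (v p.1) else 0 := by
      intro r2
      simp [liftC, extCols, apply_ite C]
    have h5 : ∑ r2 : Fin n, liftC (extCols n (m+2) v (fun p ts => bb p ts.2 ts.1)) p (0, r2)
        * FPhi n (m+2) a b c Pm (0, r2) q
        = C (v p.1) * FPhi n (m+2) a b c Pm (0, p.2) q := by
      rw [Finset.sum_congr rfl fun r2 _ => by rw [h4 r2]]
      simp [ite_mul, zero_mul, Finset.sum_ite_eq]
    have h6 : ∀ (t : Fin (m+1)) (r2 : Fin n),
        liftC (extCols n (m+2) v (fun p ts => bb p ts.2 ts.1)) p (t.succ, r2)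
        = C (bb p r2 t) := by
      intro t r2
      have hne : ((t.succ : Fin (m+2)) : ℕ) ≠ 0 := by simp [Fin.val_succ]
      simp only [liftC, extCols, Matrix.map_apply, Matrix.of_apply, dif_neg hne]
      congr 1
    have h7 : ∀ t : Fin (m+1),
        ∑ r2 : Fin n, liftC (extCols n (m+2) v (fun p ts => bb p ts.2 ts.1)) p (t.succ, r2)
          * FPhi n (m+2) a b c Pm (t.succ, r2) q
        = C (bb p q.2 t) * mrow a b c (m+2) t.val q.1.val := by
      intro t
      have h8 : ∀ r2 : Fin n, FPhi n (m+2) a b c Pm (t.succ, r2) q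
          = mrow a b c (m+2) t.val q.1.val * (if r2 = q.2 then 1 else 0) := by
        intro r2
        have := FPhi_lower n m a b c Pm (t.succ, r2) t.val (by simp [Fin.val_succ]) q.1 q.2
        simpa using this
      rw [Finset.sum_congr rfl fun r2 _ => by rw [h6 t r2, h8 r2]]
      rw [Finset.sum_congr rfl fun r2 _ => by
        rw [show C (bb p r2 t) * (mrow a b c (m+2) t.val q.1.val * (if r2 = q.2 then 1 else 0))
          = (if r2 = q.2 then C (bb p r2 t) * mrow a b c (m+2) t.val q.1.val else 0) from by
            split_ifs <;> ring]]
      rw [Finset.sum_ite_eq' Finset.univ q.2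
        (fun r2 => C (bb p r2 t) * mrow a b c (m+2) t.val q.1.val)]
      simp
    rw [h5, Finset.sum_congr rfl fun t _ => h7 t]
    have h9 := hbb p q.2 q.1
    rw [hdd] at h9
    have h10 : L p (q.1, q.2) - C (v p.1) * FPhi n (m+2) a b c Pm (0, p.2) (q.1, q.2)
        = ∑ t : Fin (m+1), C (bb p q.2 t) * mrow a b c (m+2) t.val q.1.val := h9
    have hq : q = (q.1, q.2) := rfl
    rw [hq]
    linear_combination h10
  · -- reverse direction
    rintro ⟨B, rfl⟩
    show liftC (extCols n (m+2) v B) * FPhi n (m+2) a b c Pm * PhiMat n (m+2) φ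
        = vKron n (m+2) v (matP n (m+2) φ Pm)
    rw [Matrix.mul_assoc, hFP]
    ext p q : 1
    rw [Matrix.mul_apply, Fintype.sum_prod_type, Fin.sum_univ_succ]
    have h4 : ∀ r2 : Fin n, liftC (extCols n (m+2) v B) p (0, r2)
        = if p.2 = r2 then C (v p.1) else 0 := by
      intro r2
      simp [liftC, extCols, apply_ite C]
    have hrest : ∀ (r1 : Fin (m+1)) (r2 : Fin n),
        liftC (extCols n (m+2) v B) p (r1.succ, r2)
          * Matrix.of (fun (r : Fin (m+2) × Fin n) (q : Fin n) =>
              if (r.1 : ℕ) = 0 then matP n (m+2) φ Pm r.2 q else 0) (r1.succ, r2) q = 0 := by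
      intro r1 r2
      have : ((r1.succ : Fin (m+2)) : ℕ) ≠ 0 := by simp [Fin.val_succ]
      simp [Matrix.of_apply, this]
    simp only [hrest, Finset.sum_const_zero, add_zero]
    have h5 : ∀ r2 : Fin n,
        liftC (extCols n (m+2) v B) p (0, r2)
          * Matrix.of (fun (r : Fin (m+2) × Fin n) (q : Fin n) =>
              if (r.1 : ℕ) = 0 then matP n (m+2) φ Pm r.2 q else 0) ((0 : Fin (m+2)), r2) q
        = if p.2 = r2 then C (v p.1) * matP n (m+2) φ Pm r2 q else 0 := by
      intro r2
      rw [h4 r2]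
      simp only [Matrix.of_apply, Fin.val_zero, if_pos rfl]
      split_ifs <;> ring
    rw [Finset.sum_congr rfl fun r2 _ => h5 r2]
    rw [Finset.sum_ite_eq Finset.univ p.2 (fun r2 => C (v p.1) * matP n (m+2) φ Pm r2 q)]
    simp [vKron]
end
end

section
/- Characterization of 𝕄₂(P): a kn×kn matrix pencil ℒ(λ) belongs to 𝕄₂(P) with ansatz vector v ∈ ℝ^k (i.e., (Φ_k(λ)^T ⊗ I_n)ℒ(λ) = v^T ⊗ P(λ)) if and only if ℒ(λ) = F_Φ^P(λ)^𝓑 · [v^T⊗I_n; B^𝓑] for some matrix B ∈ ℝ^{kn×(k−1)n}, where [v^T⊗I_n; B^𝓑] denotes the kn×kn matrix whose first n rows form v^T⊗I_n and whose remaining (k−1)n rows form the block transpose B^𝓑 of B. This holds whether P is regular or singular. -/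
open Polynomial Matrix

noncomputable section

/-!
`(Φ_k(λ)ᵀ ⊗ I_n) F_Φ^P(λ)^𝓑 = e₁ᵀ ⊗ P(λ)`: the block row `m_Φ^P` pairs with `Φ_k` to give `P`
once `φ_k` is expanded by the recurrence, and each row of `M_Φ^⋆` pairs with `Φ_k` to give `0`
because it *is* the recurrence. Multiplying on the right by `[vᵀ ⊗ I_n; B^𝓑]` shows that every
such pencil lies in `𝕄₂(P)` with ansatz vector `v`.

Conversely, if `ℒ ∈ 𝕄₂(P)` with ansatz vector `v`, then `D = ℒ - F_Φ^P(λ)^𝓑 [vᵀ ⊗ I_n; 0]` is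
a pencil with `(Φ_kᵀ ⊗ I_n) D = 0`. Each scalar column `d` of `D` is a pencil with `Φ_kᵀ d = 0`,
and such `d` are exactly the vectors `M_Φ^⋆(λ)ᵀ g` with `g` constant: the `λ`-coefficients of
`d` determine `g`, and the residual `d - M_Φ^⋆ᵀ g` is constant in every entry but the one paired
with `φ_{k-1}`, so it vanishes because `deg φ_j = j`. Collecting the vectors `g` gives `B`.
-/

def PhiVec (k : ℕ) (φ : ℕ → ℝ[X]) : Fin k → ℝ[X] := fun i => φ (k - 1 - i)

/-- The paper's `M_Φ^⋆(λ)` with rows and columns indexed from `0`: row `r` is the paper's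
row `r + 1`. -/
def MStar (k : ℕ) (a b c : ℕ → ℝ) : Matrix (Fin (k - 1)) (Fin k) ℝ[X] :=
  Matrix.of fun r q =>
    if (q : ℕ) = r then -C (a (k - 2 - r))
    else if (q : ℕ) = r + 1 then X - C (b (k - 2 - r))
    else if (q : ℕ) = r + 2 then -C (c (k - 2 - r))
    else 0

lemma PhiVec_succ {m : ℕ} (φ : ℕ → ℝ[X]) (i : Fin m) :
    PhiVec (m + 1) φ i.succ = PhiVec m φ i := by
  simp only [PhiVec, Fin.val_succ]
  congr 1
  omega

lemma degree_sum_mul_C_le_one {ι : Type*} (s : Finset ι) (f : ι → ℝ[X]) (g : ι → ℝ)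
    (hf : ∀ i ∈ s, (f i).degree ≤ 1) : (∑ i ∈ s, f i * C (g i)).degree ≤ 1 := by
  rw [← mem_degreeLE]
  refine Submodule.sum_mem _ fun i hi => ?_
  rw [mul_comm, ← smul_eq_C_mul]
  exact Submodule.smul_mem _ _ (mem_degreeLE.2 (hf i hi))

lemma degree_MStar_le (k : ℕ) (a b c : ℕ → ℝ) (r : Fin (k - 1)) (q : Fin k) :
    (MStar k a b c r q).degree ≤ 1 := by
  simp only [MStar, of_apply]
  split_ifs <;> compute_degree <;> norm_num

lemma coeff_one_MStar (k : ℕ) (a b c : ℕ → ℝ) (r : Fin (k - 1)) (q : Fin k) :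
    (MStar k a b c r q).coeff 1 = if (q : ℕ) = r + 1 then 1 else 0 := by
  simp only [MStar, of_apply]
  split_ifs <;> first | omega | simp

lemma eq_zero_of_PhiVec_dotProduct_eq_zero {φ : ℕ → ℝ[X]} (hφ : ∀ j, (φ j).degree = j) :
    ∀ {k : ℕ} (ρ : Fin k → ℝ[X]), (∀ i : Fin k, (i : ℕ) ≠ 0 → (ρ i).degree ≤ 0) →
      PhiVec k φ ⬝ᵥ ρ = 0 → ρ = 0
  | 0, ρ, _, _ => Subsingleton.elim _ _
  | m + 1, ρ, hρ, h => by
    rw [dotProduct, Fin.sum_univ_succ] at h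
    simp only [PhiVec_succ] at h
    have htail : (PhiVec m φ ⬝ᵥ fun i => ρ i.succ).degree < m := by
      refine (degree_sum_le _ _).trans_lt ((Finset.sup_lt_iff (WithBot.bot_lt_coe m)).2 ?_)
      intro i _
      refine (degree_mul_le _ _).trans_lt ?_
      calc (PhiVec m φ i).degree + (ρ i.succ).degree ≤ ↑(m - 1 - i) + 0 := by
            gcongr
            · exact (hφ _).le
            · exact hρ _ (Nat.succ_ne_zero i)
        _ < m := by norm_cast; omega
    have hhead : ρ 0 = 0 := by
      by_contra hne
      have hdeg := congrArg degree (eq_neg_of_add_eq_zero_left h)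
      rw [degree_neg, degree_mul, PhiVec, hφ] at hdeg
      simp only [Fin.val_zero, add_tsub_cancel_right, tsub_zero] at hdeg
      have hle : (m : WithBot ℕ) ≤ m + (ρ 0).degree :=
        le_add_of_nonneg_right (zero_le_degree_iff.2 hne)
      exact absurd htail (not_lt.2 (hle.trans hdeg.le))
    rw [hhead, mul_zero, zero_add] at h
    have hsucc := eq_zero_of_PhiVec_dotProduct_eq_zero hφ (fun i => ρ i.succ)
      (fun i _ => hρ _ (Nat.succ_ne_zero i)) h
    ext1 i
    exact Fin.cases hhead (congrFun hsucc) i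

section Recurrence

variable {a b c : ℕ → ℝ} {φ : ℕ → ℝ[X]} (ha : ∀ j, a j ≠ 0) (hφ0 : φ 0 = 1)
  (hφ1 : C (a 0) * φ 1 = (X - C (b 0)) * φ 0)
  (hφrec : ∀ j, C (a (j + 1)) * φ (j + 2) =
    (X - C (b (j + 1))) * φ (j + 1) - C (c (j + 1)) * φ j)

include ha hφ0 hφ1 hφrec in
lemma degree_phi (j : ℕ) : (φ j).degree = j := by
  induction j using Nat.twoStepInduction with
  | zero => simp [hφ0]
  | one => rw [← degree_C_mul (ha 0), hφ1, hφ0, mul_one, degree_X_sub_C]; rfl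
  | more j ih₀ ih₁ =>
    have hlead : ((X - C (b (j + 1))) * φ (j + 1)).degree = ↑(j + 2) := by
      rw [degree_mul, degree_X_sub_C, ih₁]; norm_cast; omega
    have htail : (C (c (j + 1)) * φ j).degree < ↑(j + 2) := by
      refine (degree_mul_le _ _).trans_lt ?_
      rw [ih₀]
      calc (C (c (j + 1))).degree + j ≤ 0 + j := by gcongr; exact degree_C_le
        _ < ↑(j + 2) := by norm_cast; omega
    rw [← degree_C_mul (ha (j + 1)), hφrec, degree_sub_eq_left_of_degree_lt (hlead ▸ htail),
      hlead]

include hφ1 hφrec in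
lemma MStar_mulVec_PhiVec (k : ℕ) : MStar k a b c *ᵥ PhiVec k φ = 0 := by
  funext r
  obtain ⟨j, hj⟩ : ∃ j, k = r + j + 2 := ⟨k - 2 - r, by omega⟩
  have hterm : ∀ q : Fin k, MStar k a b c r q * PhiVec k φ q =
      ((if (q : ℕ) = r then -C (a j) * φ (j + 1) else 0) +
      (if (q : ℕ) = r + 1 then (X - C (b j)) * φ j else 0)) +
      (if (q : ℕ) = r + 2 then -C (c j) * φ (j - 1) else 0) := by
    intro q
    simp only [MStar, PhiVec, of_apply, show k - 2 - r = j by omega]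
    split_ifs <;> (try omega) <;> simp only [add_zero, zero_add, zero_mul] <;> congr 2 <;> omega
  simp only [mulVec, dotProduct, hterm, Finset.sum_add_distrib, Pi.zero_apply]
  rw [Fin.sum_univ_eq_sum_range (fun q => if q = (r : ℕ) then -C (a j) * φ (j + 1) else 0),
    Fin.sum_univ_eq_sum_range (fun q => if q = (r : ℕ) + 1 then (X - C (b j)) * φ j else 0),
    Fin.sum_univ_eq_sum_range (fun q => if q = (r : ℕ) + 2 then -C (c j) * φ (j - 1) else 0)]
  simp only [Finset.sum_ite_eq', Finset.mem_range]
  rcases j with _ | j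
  · simp only [show (r : ℕ) < k by omega, show (r : ℕ) + 1 < k by omega,
      show ¬ (r : ℕ) + 2 < k by omega, if_true, if_false]
    linear_combination -hφ1
  · simp only [show (r : ℕ) < k by omega, show (r : ℕ) + 1 < k by omega,
      show (r : ℕ) + 2 < k by omega, if_true, add_tsub_cancel_right]
    linear_combination -hφrec j

include ha hφ0 hφ1 hφrec in
lemma exists_eq_MStar_transpose_mulVec {k : ℕ} (d : Fin k → ℝ[X])
    (hd : ∀ i, (d i).degree ≤ 1) (h : PhiVec k φ ⬝ᵥ d = 0) :
    ∃ g : Fin (k - 1) → ℝ, d = (MStar k a b c)ᵀ *ᵥ fun r => C (g r) := by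
  cases k with
  | zero => exact ⟨Fin.elim0, Subsingleton.elim _ _⟩
  | succ m =>
  -- column `r + 1` of `MStar` has its only `X` in row `r`
  refine ⟨fun r => (d r.succ).coeff 1, ?_⟩
  rw [← sub_eq_zero]
  refine eq_zero_of_PhiVec_dotProduct_eq_zero (degree_phi ha hφ0 hφ1 hφrec) _ ?_ ?_
  · intro i hi
    obtain ⟨r, rfl⟩ : ∃ r, Fin.succ r = i := Fin.exists_succ_eq.2 (Fin.ne_of_val_ne hi)
    set e := (d - (MStar (m + 1) a b c)ᵀ *ᵥ fun r => C ((d r.succ).coeff 1)) r.succ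
    have hdeg : e.degree ≤ 1 :=
      (degree_sub_le _ _).trans (max_le (hd _)
        (degree_sum_mul_C_le_one Finset.univ (fun r' => MStar (m + 1) a b c r' r.succ) _
          fun r' _ => degree_MStar_le _ _ _ _ r' _))
    have hcoeff : e.coeff 1 = 0 := by
      simp [e, mulVec, dotProduct, coeff_one_MStar, Fin.val_inj]
    rw [eq_X_add_C_of_degree_le_one hdeg, hcoeff, C_0, zero_mul, zero_add]
    exact degree_C_le
  · rw [dotProduct_sub, h, dotProduct_mulVec, vecMul_transpose, MStar_mulVec_PhiVec hφ1 hφrec,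
      zero_dotProduct, sub_zero]

end Recurrence

lemma IsPencil.sub {m m' : Type*} {A B : Matrix m m' ℝ[X]} (hA : IsPencil A) (hB : IsPencil B) :
    IsPencil (A - B) := fun p q => (degree_sub_le _ _).trans (max_le (hA p q) (hB p q))

lemma IsPencil.mul_liftC {l m m' : Type*} [Fintype m] {A : Matrix l m ℝ[X]} (hA : IsPencil A)
    (R : Matrix m m' ℝ) : IsPencil (A * liftC R) := fun p q =>
  degree_sum_mul_C_le_one Finset.univ (A p) (fun j => R j q) fun j _ => hA p j

lemma liftC_add {m m' : Type*} (A B : Matrix m m' ℝ) : liftC (A + B) = liftC A + liftC B :=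
  Matrix.map_add C (fun _ _ => C_add) A B

lemma extRows_add {n k : ℕ} (w w' : Fin k → ℝ)
    (B B' : Matrix (Fin (k - 1) × Fin n) (Fin k × Fin n) ℝ) :
    extRows n k (w + w') (B + B') = extRows n k w B + extRows n k w' B' := by
  ext p q
  simp only [extRows, of_apply, Matrix.add_apply, Pi.add_apply]
  split_ifs <;> simp

lemma extRows_apply_of_val_eq_succ {n k : ℕ} (w : Fin k → ℝ)
    (B : Matrix (Fin (k - 1) × Fin n) (Fin k × Fin n) ℝ) (r : Fin (k - 1))
    {p : Fin k × Fin n} (hp : (p.1 : ℕ) = r + 1) (q : Fin k × Fin n) :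
    extRows n k w B p q = B (r, p.2) q := by
  simp only [extRows, of_apply, hp, add_eq_zero, one_ne_zero, and_false, dif_neg,
    not_false_eq_true]
  rfl

lemma PhiMat_transpose_mul_apply {n k : ℕ} {ι : Type*} (φ : ℕ → ℝ[X])
    (A : Matrix (Fin k × Fin n) ι ℝ[X]) (s : Fin n) (q : ι) :
    ((PhiMat n k φ)ᵀ * A) s q = PhiVec k φ ⬝ᵥ fun i => A (i, s) q := by
  simp [mul_apply, Fintype.sum_prod_type, PhiMat, PhiVec, dotProduct]

lemma vKronRow_mul_liftC_extRows {n k : ℕ} (w : Fin k → ℝ) (Q : Matrix (Fin n) (Fin n) ℝ[X])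
    (B : Matrix (Fin (k - 1) × Fin n) (Fin k × Fin n) ℝ) :
    vKronRow n k (fun i => if (i : ℕ) = 0 then 1 else 0) Q * liftC (extRows n k w B) =
      vKronRow n k w Q := by
  refine Matrix.ext fun s q => ?_
  obtain ⟨m, rfl⟩ : ∃ m, k = m + 1 := ⟨k - 1, by have := q.1.pos; omega⟩
  simp [mul_apply, Fintype.sum_prod_type, vKronRow, liftC, extRows, mul_comm, apply_ite C]

section Anchor

variable {n k : ℕ} (a b c : ℕ → ℝ) (Pm : ℕ → Matrix (Fin n) (Fin n) ℝ)

lemma isPencil_blockTr_FPhi : IsPencil (blockTr (FPhi n k a b c Pm)) := by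
  intro p q
  simp only [blockTr, FPhi, of_apply]
  split_ifs <;> compute_degree <;> norm_num

lemma FPhi_apply_of_val_eq_succ (r : Fin (k - 1)) {p q : Fin k × Fin n}
    (hp : (p.1 : ℕ) = r + 1) :
    FPhi n k a b c Pm p q = MStar k a b c r q.1 * if p.2 = q.2 then 1 else 0 := by
  simp only [FPhi, MStar, of_apply, hp, Nat.add_right_cancel_iff, add_eq_zero, one_ne_zero,
    and_false, if_false, show k - 1 - (r + 1) = k - 2 - r by omega]

lemma PhiVec_dotProduct_FPhi_of_val_eq_zero {φ : ℕ → ℝ[X]} (hk : 2 ≤ k) (hak : a (k - 1) ≠ 0)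
    (hrec : C (a (k - 1)) * φ k = (X - C (b (k - 1))) * φ (k - 1) - C (c (k - 1)) * φ (k - 2))
    {p : Fin k × Fin n} (hp : (p.1 : ℕ) = 0) (t : Fin n) :
    PhiVec k φ ⬝ᵥ (fun i => FPhi n k a b c Pm p (i, t)) = matP n k φ Pm p.2 t := by
  obtain ⟨m, rfl⟩ : ∃ m, k = m + 2 := ⟨k - 2, by omega⟩
  simp only [show m + 2 - 1 = m + 1 from rfl, show m + 2 - 2 = m from rfl] at hak hrec
  have hφ : φ (m + 2) =
      C (a (m + 1))⁻¹ * ((X - C (b (m + 1))) * φ (m + 1) - C (c (m + 1)) * φ m) := by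
    rw [← hrec, ← mul_assoc, ← C_mul, inv_mul_cancel₀ hak, C_1, one_mul]
  have hrest : ∑ i : Fin m, φ (m + 1 - (i + 1 + 1)) * C (Pm (m + 1 - (i + 1 + 1)) p.2 t) =
      ∑ i ∈ Finset.range m, C (Pm i p.2 t) * φ i := by
    rw [Fin.sum_univ_eq_sum_range (fun i => φ (m + 1 - (i + 1 + 1)) *
      C (Pm (m + 1 - (i + 1 + 1)) p.2 t)), ← Finset.sum_range_reflect]
    refine Finset.sum_congr rfl fun i hi => ?_
    rw [Finset.mem_range] at hi
    rw [show m + 1 - (m - 1 - i + 1 + 1) = i by omega, mul_comm]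
  simp only [dotProduct, PhiVec, FPhi, of_apply, if_pos hp, Fin.sum_univ_succ, Fin.val_zero,
    Fin.val_succ, if_true, Nat.add_one_ne_zero, add_eq_right, if_false, zero_add, tsub_zero,
    show m + 2 - 1 = m + 1 from rfl, show m + 2 - 2 = m from rfl, hrest, add_tsub_cancel_right]
  simp only [matP, of_apply, Finset.sum_range_succ, hφ, div_eq_mul_inv, C_mul]
  ring

lemma PhiMat_transpose_mul_blockTr_FPhi {φ : ℕ → ℝ[X]} (hk : 2 ≤ k) (hak : a (k - 1) ≠ 0)
    (hφ1 : C (a 0) * φ 1 = (X - C (b 0)) * φ 0)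
    (hφrec : ∀ j, C (a (j + 1)) * φ (j + 2) =
      (X - C (b (j + 1))) * φ (j + 1) - C (c (j + 1)) * φ j) :
    (PhiMat n k φ)ᵀ * blockTr (FPhi n k a b c Pm) =
      vKronRow n k (fun i => if (i : ℕ) = 0 then 1 else 0) (matP n k φ Pm) := by
  refine Matrix.ext fun s q => ?_
  rw [PhiMat_transpose_mul_apply]
  simp only [blockTr, vKronRow, of_apply]
  by_cases hq : (q.1 : ℕ) = 0
  · have hrec : C (a (k - 1)) * φ k =
        (X - C (b (k - 1))) * φ (k - 1) - C (c (k - 1)) * φ (k - 2) := by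
      obtain ⟨m, rfl⟩ : ∃ m, k = m + 2 := ⟨k - 2, by omega⟩
      exact hφrec m
    rw [PhiVec_dotProduct_FPhi_of_val_eq_zero a b c Pm hk hak hrec (p := (q.1, s)) hq, if_pos hq,
      C_1, one_mul]
  · set r : Fin (k - 1) := ⟨q.1 - 1, by omega⟩
    have hM := congrFun (MStar_mulVec_PhiVec hφ1 hφrec k) r
    simp only [FPhi_apply_of_val_eq_succ a b c Pm r (p := (q.1, s)) (by simp [r]; omega),
      if_neg hq, C_0, zero_mul, dotProduct, mulVec, Pi.zero_apply] at hM ⊢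
    calc ∑ x, PhiVec k φ x * (MStar k a b c r x * if s = q.2 then 1 else 0)
        = (∑ x, MStar k a b c r x * PhiVec k φ x) * if s = q.2 then 1 else 0 := by
          rw [Finset.sum_mul]
          exact Finset.sum_congr rfl fun x _ => by ring
      _ = 0 := by rw [hM, zero_mul]

lemma blockTr_FPhi_mul_liftC_extRows_zero_apply
    (B : Matrix (Fin (k - 1) × Fin n) (Fin k × Fin n) ℝ) (p q : Fin k × Fin n) :
    (blockTr (FPhi n k a b c Pm) * liftC (extRows n k 0 B)) p q =
      ((MStar k a b c)ᵀ *ᵥ fun r => C (B (r, p.2) q)) p.1 := by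
  obtain ⟨m, rfl⟩ : ∃ m, k = m + 1 := ⟨k - 1, by have := p.1.pos; omega⟩
  rw [mul_apply, Fintype.sum_prod_type, Fin.sum_univ_succ]
  have hzero : ∀ t, extRows n (m + 1) 0 B (0, t) q = 0 := fun t => by simp [extRows]
  simp only [blockTr, liftC, of_apply, map_apply, hzero, C_0, mul_zero, Finset.sum_const_zero,
    zero_add, mulVec, dotProduct, transpose_apply]
  refine Finset.sum_congr rfl fun r _ => ?_
  simp only [FPhi_apply_of_val_eq_succ (k := m + 1) a b c Pm r (p := (r.succ, _))
    (Fin.val_succ r), extRows_apply_of_val_eq_succ (k := m + 1) 0 B r (p := (r.succ, _))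
    (Fin.val_succ r)]
  simp

lemma exists_eq_blockTr_FPhi_mul_of_PhiMat_transpose_mul_eq_zero {φ : ℕ → ℝ[X]}
    (ha : ∀ j, a j ≠ 0) (hφ0 : φ 0 = 1)
    (hφ1 : C (a 0) * φ 1 = (X - C (b 0)) * φ 0)
    (hφrec : ∀ j, C (a (j + 1)) * φ (j + 2) =
      (X - C (b (j + 1))) * φ (j + 1) - C (c (j + 1)) * φ j)
    {D : Matrix (Fin k × Fin n) (Fin k × Fin n) ℝ[X]}
    (hD : IsPencil D) (h : (PhiMat n k φ)ᵀ * D = 0) :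
    ∃ B : Matrix (Fin k × Fin n) (Fin (k - 1) × Fin n) ℝ,
      D = blockTr (FPhi n k a b c Pm) * liftC (extRows n k 0 (blockTr B)) := by
  have hcol : ∀ s q, ∃ g : Fin (k - 1) → ℝ,
      (fun i => D (i, s) q) = (MStar k a b c)ᵀ *ᵥ fun r => C (g r) := fun s q =>
    exists_eq_MStar_transpose_mulVec ha hφ0 hφ1 hφrec _ (fun i => hD _ _)
      (by rw [← PhiMat_transpose_mul_apply, h, Matrix.zero_apply])
  choose g hg using hcol
  refine ⟨Matrix.of fun p r => g p.2 (p.1, r.2) r.1, ?_⟩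
  refine Matrix.ext fun p q => ?_
  rw [blockTr_FPhi_mul_liftC_extRows_zero_apply]
  exact congrFun (hg p.2 q) p.1

end Anchor

theorem statement_1_general
    (n k : ℕ) (hk : 2 ≤ k)
    (a b c : ℕ → ℝ) (ha : ∀ j, a j ≠ 0)
    (φ : ℕ → Polynomial ℝ) (hφ0 : φ 0 = 1)
    (hφ1 : C (a 0) * φ 1 = (X - C (b 0)) * φ 0)
    (hφrec : ∀ j, C (a (j + 1)) * φ (j + 2) =
      (X - C (b (j + 1))) * φ (j + 1) - C (c (j + 1)) * φ j)
    (Pm : ℕ → Matrix (Fin n) (Fin n) ℝ)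
    (L : Matrix (Fin k × Fin n) (Fin k × Fin n) (Polynomial ℝ)) (hL : IsPencil L) (v : Fin k → ℝ) :
    Ansatz2 n k φ Pm L v ↔
      ∃ B : Matrix (Fin k × Fin n) (Fin (k - 1) × Fin n) ℝ,
        L = blockTr (FPhi n k a b c Pm) * liftC (extRows n k v (blockTr B)) := by
  have hanchor : ∀ B', Ansatz2 n k φ Pm
      (blockTr (FPhi n k a b c Pm) * liftC (extRows n k v B')) v := fun B' => by
    rw [Ansatz2, ← Matrix.mul_assoc,
      PhiMat_transpose_mul_blockTr_FPhi a b c Pm hk (ha _) hφ1 hφrec, vKronRow_mul_liftC_extRows]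
  constructor
  · intro hA
    obtain ⟨B, hB⟩ := exists_eq_blockTr_FPhi_mul_of_PhiMat_transpose_mul_eq_zero a b c Pm
      ha hφ0 hφ1 hφrec (hL.sub ((isPencil_blockTr_FPhi a b c Pm).mul_liftC (extRows n k v 0)))
      (by rw [Matrix.mul_sub, hA, hanchor 0, sub_self])
    refine ⟨B, ?_⟩
    rw [← add_zero v, ← zero_add (blockTr B), extRows_add, liftC_add, Matrix.mul_add, ← hB,
      add_sub_cancel]
  · rintro ⟨B, rfl⟩
    exact hanchor _

theorem statement_1
    (n k : ℕ) (hn : 0 < n) (hk : 2 ≤ k)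
    (a b c : ℕ → ℝ) (ha : ∀ j, a j ≠ 0)
    (φ : ℕ → Polynomial ℝ) (hφ0 : φ 0 = 1)
    (hφ1 : C (a 0) * φ 1 = (X - C (b 0)) * φ 0)
    (hφrec : ∀ j, C (a (j + 1)) * φ (j + 2) =
      (X - C (b (j + 1))) * φ (j + 1) - C (c (j + 1)) * φ j)
    (Pm : ℕ → Matrix (Fin n) (Fin n) ℝ) (hPk : Pm k ≠ 0)
    (L : Matrix (Fin k × Fin n) (Fin k × Fin n) (Polynomial ℝ)) (hL : IsPencil L) (v : Fin k → ℝ) :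
    Ansatz2 n k φ Pm L v ↔
      ∃ B : Matrix (Fin k × Fin n) (Fin (k - 1) × Fin n) ℝ,
        L = blockTr (FPhi n k a b c Pm) * liftC (extRows n k v (blockTr B)) :=
  statement_1_general n k hk a b c ha φ hφ0 hφ1 hφrec Pm L hL v
end
end

section
/- Dimension of the ansatz spaces: viewing a kn×kn matrix pencil ℒ(λ) = Xλ + Y as the pair (X, Y) of kn×kn real matrices, 𝕄₁(P) and 𝕄₂(P) are real linear subspaces of the space of all kn×kn matrix pencils, and dim 𝕄₁(P) = dim 𝕄₂(P) = k(k−1)n² + k. This holds whether P is regular or singular. -/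
open Polynomial Matrix

noncomputable section

/-! Since `deg φ_j = j`, the map `(x, y) ↦ (xᵀλ + yᵀ) Φ_k(λ)` from `ℝᵏ × ℝᵏ` onto the polynomials
of degree at most `k` has a `(k - 1)`-dimensional kernel. Each of the `kn · n` entries of
`(Xλ + Y)(Φ_k(λ) ⊗ I_n)` is this map applied to its own set of coefficients of `(X, Y)`, so
`(X, Y) ↦ (Xλ + Y)(Φ_k(λ) ⊗ I_n)` has a kernel of dimension `kn · n · (k - 1)` and its image
contains every `v ⊗ P(λ)`. As `v ↦ v ⊗ P(λ)` is injective, `𝕄₁(P)`, the preimage of its image,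
has dimension `k(k - 1)n² + k`. Transposition carries `𝕄₂(P)` onto `𝕄₁(Pᵀ)`. -/

section LinearAlgebra

variable {R M N : Type*} [DivisionRing R] [AddCommGroup M] [Module R M] [AddCommGroup N]
  [Module R N]

theorem Submodule.finrank_comap_eq_finrank_ker_add [FiniteDimensional R M] {f : M →ₗ[R] N}
    {W : Submodule R N} (hW : W ≤ LinearMap.range f) :
    Module.finrank R (W.comap f) = Module.finrank R (LinearMap.ker f) + Module.finrank R W := by
  have hker : LinearMap.ker f ≤ W.comap f := fun x hx => by
    simp [LinearMap.mem_ker.1 hx]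
  have := LinearMap.finrank_range_add_finrank_ker (f.domRestrict (W.comap f))
  rw [LinearMap.range_domRestrict, Submodule.map_comap_eq_of_le hW, LinearMap.ker_domRestrict,
    (Submodule.comapSubtypeEquivOfLe hker).finrank_eq] at this
  omega

theorem LinearMap.finrank_ker_compLeft [FiniteDimensional R M] (f : M →ₗ[R] N) (ι : Type*)
    [Fintype ι] :
    Module.finrank R (LinearMap.ker (f.compLeft ι)) =
      Fintype.card ι * Module.finrank R (LinearMap.ker f) := by
  have hinj : Function.Injective ((LinearMap.ker f).subtype.compLeft ι) :=
    Subtype.val_injective.comp_left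
  have hrange : LinearMap.range ((LinearMap.ker f).subtype.compLeft ι) =
      LinearMap.ker (f.compLeft ι) := by
    rw [LinearMap.range_compLeft, Submodule.range_subtype, LinearMap.ker_compLeft]
  rw [← hrange, LinearMap.finrank_range_of_inj hinj, Module.finrank_pi_fintype,
    Finset.sum_const, Finset.card_univ, smul_eq_mul]

end LinearAlgebra

theorem degree_eq_of_threeTermRecurrence {a b c : ℕ → ℝ} (ha : ∀ j, a j ≠ 0)
    {φ : ℕ → ℝ[X]} (hφ0 : φ 0 = 1) (hφ1 : C (a 0) * φ 1 = (X - C (b 0)) * φ 0)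
    (hφrec : ∀ j, C (a (j + 1)) * φ (j + 2) =
      (X - C (b (j + 1))) * φ (j + 1) - C (c (j + 1)) * φ j) :
    ∀ j, (φ j).degree = j := by
  refine Nat.twoStepInduction ?_ ?_ fun j hj hj1 => ?_
  · simp [hφ0]
  · rw [← degree_C_mul (ha 0), hφ1, hφ0, mul_one, degree_X_sub_C, Nat.cast_one]
  · have hlead : ((X - C (b (j + 1))) * φ (j + 1)).degree = ((j + 2 : ℕ) : WithBot ℕ) := by
      rw [degree_mul, degree_X_sub_C, hj1]
      norm_cast
      omega
    have htail : (C (c (j + 1)) * φ j).degree < ((j + 2 : ℕ) : WithBot ℕ) := by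
      rw [← smul_eq_C_mul]
      exact (degree_smul_le _ _).trans_lt (by rw [hj]; exact_mod_cast (by omega))
    rw [← degree_C_mul (ha (j + 1)), hφrec, degree_sub_eq_left_of_degree_lt (hlead ▸ htail), hlead]

section Pencil

variable (k : ℕ) (φ : ℕ → ℝ[X])

@[simps]
def rowPencilMulPhi : (Fin k → ℝ) × (Fin k → ℝ) →ₗ[ℝ] ℝ[X] where
  toFun d := ∑ j : Fin k, (C (d.1 j) * X + C (d.2 j)) * φ (k - 1 - j)
  map_add' d e := by
    simp only [Prod.fst_add, Prod.snd_add, Pi.add_apply, C_add, ← Finset.sum_add_distrib]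
    exact Finset.sum_congr rfl fun _ _ => by ring
  map_smul' r d := by
    simp only [Prod.smul_fst, Prod.smul_snd, Pi.smul_apply, smul_eq_mul, C_mul,
      RingHom.id_apply, Finset.smul_sum, smul_eq_C_mul]
    exact Finset.sum_congr rfl fun _ _ => by ring

variable {k φ}

theorem range_rowPencilMulPhi (hk : 0 < k) (hφ : ∀ j, (φ j).degree = j) :
    LinearMap.range (rowPencilMulPhi k φ) = degreeLT ℝ (k + 1) := by
  apply le_antisymm
  · rintro _ ⟨d, rfl⟩
    rw [rowPencilMulPhi_apply]
    refine Submodule.sum_mem _ fun j _ => ?_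
    rw [mem_degreeLT]
    refine (degree_mul_le _ _).trans_lt ?_
    grw [degree_linear_le, hφ]
    exact_mod_cast (by omega : 1 + (k - 1 - j) < k + 1)
  · -- `φ_0, …, φ_{k-1}` and `λ φ_{k-1}` are values of the map, of degrees `0, …, k`.
    let ψ : Polynomial.Sequence ℝ :=
      ⟨fun i => if i = k then X * φ (k - 1) else φ i, fun i => by
        split_ifs with hi
        · rw [degree_mul, degree_X, hφ, hi]
          norm_cast
          omega
        · exact hφ i⟩
    rw [← ψ.span_degreeLT (m := k + 1) fun i _ => (leadingCoeff_ne_zero.2 (ψ.ne_zero i)).isUnit]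
    refine Submodule.span_le.2 ?_
    rintro _ ⟨i, hi, rfl⟩
    rw [Set.mem_Iio] at hi
    by_cases hik : i = k
    · refine ⟨(Pi.single ⟨0, hk⟩ 1, 0), ?_⟩
      simp [ψ, hik, Pi.single_apply]
    · refine ⟨(0, Pi.single ⟨k - 1 - i, by omega⟩ 1), ?_⟩
      simp [ψ, hik, Pi.single_apply, show k - 1 - (k - 1 - i) = i by omega]

theorem finrank_ker_rowPencilMulPhi (hk : 0 < k) (hφ : ∀ j, (φ j).degree = j) :
    Module.finrank ℝ (LinearMap.ker (rowPencilMulPhi k φ)) = k - 1 := by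
  have := LinearMap.finrank_range_add_finrank_ker (rowPencilMulPhi k φ)
  rw [range_rowPencilMulPhi hk hφ, (degreeLTEquiv ℝ (k + 1)).finrank_eq] at this
  simp only [Module.finrank_prod, Module.finrank_fin_fun] at this
  omega

end Pencil

section Ansatz

variable (n k : ℕ) (φ : ℕ → ℝ[X]) (Pm : ℕ → Matrix (Fin n) (Fin n) ℝ)

abbrev PencilSpace : Type :=
  Matrix (Fin k × Fin n) (Fin k × Fin n) ℝ × Matrix (Fin k × Fin n) (Fin k × Fin n) ℝ

/-- Entry `(p, s)` of `(Xλ + Y)(Φ_k(λ) ⊗ I_n)` involves exactly the coefficients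
`X_{p,(j,s)}, Y_{p,(j,s)}`, `j < k`; this groups the coefficients of a pencil accordingly. -/
@[simps apply]
def pencilCoeffEquiv :
    PencilSpace n k ≃ₗ[ℝ] ((Fin k × Fin n) × Fin n → (Fin k → ℝ) × (Fin k → ℝ)) where
  toFun L i := (fun j => L.1 i.1 (j, i.2), fun j => L.2 i.1 (j, i.2))
  invFun f := (Matrix.of fun p q => (f (p, q.2)).1 q.1, Matrix.of fun p q => (f (p, q.2)).2 q.1)
  map_add' _ _ := rfl
  map_smul' _ _ := rfl
  left_inv _ := rfl
  right_inv _ := rfl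

variable {n k}

theorem pencilPoly_mul_PhiMat_apply (L : PencilSpace n k) (p : Fin k × Fin n) (s : Fin n) :
    (pencilPoly L.1 L.2 * PhiMat n k φ) p s =
      rowPencilMulPhi k φ (pencilCoeffEquiv n k L (p, s)) := by
  simp [Matrix.mul_apply, Fintype.sum_prod_type, pencilPoly, PhiMat]

variable (n k)

@[simps]
def pencilMulPhi : PencilSpace n k →ₗ[ℝ] Matrix (Fin k × Fin n) (Fin n) ℝ[X] where
  toFun L := pencilPoly L.1 L.2 * PhiMat n k φ
  map_add' L L' := by
    ext p s
    simp only [Matrix.add_apply, pencilPoly_mul_PhiMat_apply, map_add, Pi.add_apply]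
  map_smul' r L := by
    ext p s
    simp only [Matrix.smul_apply, pencilPoly_mul_PhiMat_apply, map_smul, Pi.smul_apply,
      RingHom.id_apply]

variable {n k φ}

theorem finrank_ker_pencilMulPhi (hk : 0 < k) (hφ : ∀ j, (φ j).degree = j) :
    Module.finrank ℝ (LinearMap.ker (pencilMulPhi n k φ)) = k * n * n * (k - 1) := by
  have hker : LinearMap.ker (pencilMulPhi n k φ) =
      (LinearMap.ker ((rowPencilMulPhi k φ).compLeft _)).comap
        (pencilCoeffEquiv n k).toLinearMap := by
    ext L
    simp [pencilMulPhi, ← Matrix.ext_iff, pencilPoly_mul_PhiMat_apply, funext_iff]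
  rw [hker, Submodule.comap_equiv_eq_map_symm, LinearEquiv.finrank_map_eq,
    LinearMap.finrank_ker_compLeft, finrank_ker_rowPencilMulPhi hk hφ]
  simp

theorem mem_range_pencilMulPhi (hk : 0 < k) (hφ : ∀ j, (φ j).degree = j)
    {M : Matrix (Fin k × Fin n) (Fin n) ℝ[X]} (hM : ∀ p s, M p s ∈ degreeLT ℝ (k + 1)) :
    M ∈ LinearMap.range (pencilMulPhi n k φ) := by
  simp only [← range_rowPencilMulPhi hk hφ, LinearMap.mem_range] at hM
  choose d hd using hM
  refine ⟨(pencilCoeffEquiv n k).symm fun i => d i.1 i.2, ?_⟩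
  ext p s
  rw [← hd, pencilMulPhi_apply, pencilPoly_mul_PhiMat_apply, LinearEquiv.apply_symm_apply]

variable (n k φ)

@[simps]
def vKronMatP : (Fin k → ℝ) →ₗ[ℝ] Matrix (Fin k × Fin n) (Fin n) ℝ[X] where
  toFun v := vKron n k v (matP n k φ Pm)
  map_add' v w := by
    ext p s
    simp [vKron, add_mul]
  map_smul' r v := by
    ext p s
    simp [vKron, smul_eq_C_mul, mul_assoc]

variable {n k φ Pm}

theorem matP_apply_mem_degreeLT (hφ : ∀ j, (φ j).degree = j) (r s : Fin n) :
    matP n k φ Pm r s ∈ degreeLT ℝ (k + 1) := by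
  rw [matP, Matrix.of_apply]
  refine Submodule.sum_mem _ fun i hi => ?_
  rw [← smul_eq_C_mul, mem_degreeLT]
  refine (degree_smul_le _ _).trans_lt ?_
  rw [hφ]
  exact_mod_cast Finset.mem_range.1 hi

theorem coeff_matP_apply (hφ : ∀ j, (φ j).degree = j) (r s : Fin n) :
    (matP n k φ Pm r s).coeff k = Pm k r s * (φ k).leadingCoeff := by
  rw [matP, Matrix.of_apply, finsetSum_coeff, Finset.sum_range_succ, coeff_C_mul,
    leadingCoeff, natDegree_eq_of_degree_eq_some (hφ k), add_eq_right]
  refine Finset.sum_eq_zero fun i hi => ?_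
  rw [coeff_C_mul, coeff_eq_zero_of_degree_lt, mul_zero]
  rw [hφ]
  exact_mod_cast Finset.mem_range.1 hi

theorem vKronMatP_injective (hφ : ∀ j, (φ j).degree = j) (hPk : Pm k ≠ 0) :
    Function.Injective (vKronMatP n k φ Pm) := by
  obtain ⟨r, s, hrs⟩ : ∃ r s, Pm k r s ≠ 0 := by
    by_contra! h
    exact hPk (Matrix.ext h)
  have hP : matP n k φ Pm r s ≠ 0 := fun h => by
    have := coeff_matP_apply (k := k) (Pm := Pm) hφ r s
    rw [h, coeff_zero, eq_comm, mul_eq_zero, leadingCoeff_eq_zero, ← degree_eq_bot, hφ] at this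
    exact this.elim hrs (WithBot.natCast_ne_bot k)
  rw [← LinearMap.ker_eq_bot, LinearMap.ker_eq_bot']
  intro v hv
  funext i
  have := congrFun₂ hv (i, r) s
  simpa [vKronMatP, vKron, hP] using this

theorem range_vKronMatP_le (hk : 0 < k) (hφ : ∀ j, (φ j).degree = j) :
    LinearMap.range (vKronMatP n k φ Pm) ≤ LinearMap.range (pencilMulPhi n k φ) := by
  rintro _ ⟨v, rfl⟩
  refine mem_range_pencilMulPhi hk hφ fun p s => ?_
  rw [vKronMatP_apply, vKron, Matrix.of_apply, ← smul_eq_C_mul]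
  exact Submodule.smul_mem _ _ (matP_apply_mem_degreeLT hφ _ _)

variable (n k φ Pm)

def ansatz1Submodule : Submodule ℝ (PencilSpace n k) :=
  (LinearMap.range (vKronMatP n k φ Pm)).comap (pencilMulPhi n k φ)

variable {n k φ Pm}

theorem coe_ansatz1Submodule :
    (ansatz1Submodule n k φ Pm : Set (PencilSpace n k)) =
      {L | ∃ v : Fin k → ℝ, Ansatz1 n k φ Pm (pencilPoly L.1 L.2) v} := by
  ext L
  simp [ansatz1Submodule, Ansatz1, vKronMatP, pencilMulPhi, eq_comm]

theorem finrank_ansatz1Submodule (hk : 0 < k) (hφ : ∀ j, (φ j).degree = j) (hPk : Pm k ≠ 0) :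
    Module.finrank ℝ (ansatz1Submodule n k φ Pm) = k * (k - 1) * n ^ 2 + k := by
  rw [ansatz1Submodule, Submodule.finrank_comap_eq_finrank_ker_add (range_vKronMatP_le hk hφ),
    finrank_ker_pencilMulPhi hk hφ, LinearMap.finrank_range_of_inj (vKronMatP_injective hφ hPk),
    Module.finrank_fin_fun]
  ring

theorem ansatz2_iff_ansatz1_transpose (Xm Ym : Matrix (Fin k × Fin n) (Fin k × Fin n) ℝ)
    (w : Fin k → ℝ) :
    Ansatz2 n k φ Pm (pencilPoly Xm Ym) w ↔
      Ansatz1 n k φ (fun i => (Pm i)ᵀ) (pencilPoly Xmᵀ Ymᵀ) w := by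
  rw [Ansatz1, ← Matrix.transpose_inj, Matrix.transpose_mul]
  exact Iff.rfl

variable (n k φ Pm)

def ansatz2Submodule : Submodule ℝ (PencilSpace n k) :=
  (ansatz1Submodule n k φ fun i => (Pm i)ᵀ).comap
    ((transposeLinearEquiv _ _ ℝ ℝ).prodCongr (transposeLinearEquiv _ _ ℝ ℝ)).toLinearMap

variable {n k φ Pm}

theorem coe_ansatz2Submodule :
    (ansatz2Submodule n k φ Pm : Set (PencilSpace n k)) =
      {L | ∃ v : Fin k → ℝ, Ansatz2 n k φ Pm (pencilPoly L.1 L.2) v} := by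
  ext L
  change (L.1ᵀ, L.2ᵀ) ∈ (ansatz1Submodule n k φ fun i => (Pm i)ᵀ : Set (PencilSpace n k)) ↔ _
  rw [coe_ansatz1Submodule]
  exact exists_congr fun w => (ansatz2_iff_ansatz1_transpose L.1 L.2 w).symm

theorem finrank_ansatz2Submodule (hk : 0 < k) (hφ : ∀ j, (φ j).degree = j) (hPk : Pm k ≠ 0) :
    Module.finrank ℝ (ansatz2Submodule n k φ Pm) = k * (k - 1) * n ^ 2 + k := by
  rw [ansatz2Submodule, Submodule.comap_equiv_eq_map_symm, LinearEquiv.finrank_map_eq]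
  exact finrank_ansatz1Submodule hk hφ (by simpa using hPk)

end Ansatz

theorem statement_2_general
    (n k : ℕ) (hk : 2 ≤ k)
    (a b c : ℕ → ℝ) (ha : ∀ j, a j ≠ 0)
    (φ : ℕ → Polynomial ℝ) (hφ0 : φ 0 = 1)
    (hφ1 : C (a 0) * φ 1 = (X - C (b 0)) * φ 0)
    (hφrec : ∀ j, C (a (j + 1)) * φ (j + 2) =
      (X - C (b (j + 1))) * φ (j + 1) - C (c (j + 1)) * φ j)
    (Pm : ℕ → Matrix (Fin n) (Fin n) ℝ) (hPk : Pm k ≠ 0)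
    :
    ∃ S₁ S₂ : Submodule ℝ (Matrix (Fin k × Fin n) (Fin k × Fin n) ℝ × Matrix (Fin k × Fin n) (Fin k × Fin n) ℝ),
      (S₁ : Set (Matrix (Fin k × Fin n) (Fin k × Fin n) ℝ × Matrix (Fin k × Fin n) (Fin k × Fin n) ℝ)) =
        {L | ∃ v : Fin k → ℝ, Ansatz1 n k φ Pm (pencilPoly L.1 L.2) v} ∧
      (S₂ : Set (Matrix (Fin k × Fin n) (Fin k × Fin n) ℝ × Matrix (Fin k × Fin n) (Fin k × Fin n) ℝ)) =
        {L | ∃ v : Fin k → ℝ, Ansatz2 n k φ Pm (pencilPoly L.1 L.2) v} ∧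
      Module.finrank ℝ S₁ = k * (k - 1) * n ^ 2 + k ∧
      Module.finrank ℝ S₂ = k * (k - 1) * n ^ 2 + k := by
  have hφ := degree_eq_of_threeTermRecurrence ha hφ0 hφ1 hφrec
  have hk0 : 0 < k := by omega
  exact ⟨ansatz1Submodule n k φ Pm, ansatz2Submodule n k φ Pm, coe_ansatz1Submodule,
    coe_ansatz2Submodule, finrank_ansatz1Submodule hk0 hφ hPk,
    finrank_ansatz2Submodule hk0 hφ hPk⟩

theorem statement_2
    (n k : ℕ) (hn : 0 < n) (hk : 2 ≤ k)
    (a b c : ℕ → ℝ) (ha : ∀ j, a j ≠ 0)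
    (φ : ℕ → Polynomial ℝ) (hφ0 : φ 0 = 1)
    (hφ1 : C (a 0) * φ 1 = (X - C (b 0)) * φ 0)
    (hφrec : ∀ j, C (a (j + 1)) * φ (j + 2) =
      (X - C (b (j + 1))) * φ (j + 1) - C (c (j + 1)) * φ j)
    (Pm : ℕ → Matrix (Fin n) (Fin n) ℝ) (hPk : Pm k ≠ 0)
    :
    ∃ S₁ S₂ : Submodule ℝ (Matrix (Fin k × Fin n) (Fin k × Fin n) ℝ × Matrix (Fin k × Fin n) (Fin k × Fin n) ℝ),
      (S₁ : Set (Matrix (Fin k × Fin n) (Fin k × Fin n) ℝ × Matrix (Fin k × Fin n) (Fin k × Fin n) ℝ)) =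
        {L | ∃ v : Fin k → ℝ, Ansatz1 n k φ Pm (pencilPoly L.1 L.2) v} ∧
      (S₂ : Set (Matrix (Fin k × Fin n) (Fin k × Fin n) ℝ × Matrix (Fin k × Fin n) (Fin k × Fin n) ℝ)) =
        {L | ∃ v : Fin k → ℝ, Ansatz2 n k φ Pm (pencilPoly L.1 L.2) v} ∧
      Module.finrank ℝ S₁ = k * (k - 1) * n ^ 2 + k ∧
      Module.finrank ℝ S₂ = k * (k - 1) * n ^ 2 + k :=
  statement_2_general n k hk a b c ha φ hφ0 hφ1 hφrec Pm hPk
end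
end

section
/- Necessary linearization condition in the regular case: let P(λ) be regular and let ℒ(λ) = [v⊗I_n, B] · F_Φ^P(λ) ∈ 𝕄₁(P) with v ∈ ℝ^k and B ∈ ℝ^{kn×(k−1)n}. If ℒ(λ) is a linearization of P(λ), then rank([v⊗I_n, B]) = kn, i.e., the kn×kn matrix [v⊗I_n, B] is invertible. -/
open Polynomial Matrix

noncomputable section

lemma diagPI_mul (n k : ℕ) (hk : 0 < k) (A B : Matrix (Fin n) (Fin n) (Polynomial ℝ)) :
    diagPI n k A * diagPI n k B = diagPI n k (A * B) := by
  apply Matrix.ext; intro p q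
  simp only [Matrix.mul_apply, diagPI, Matrix.of_apply]
  rw [Fintype.sum_prod_type]
  by_cases hp : p.1.val = 0
  · by_cases hq : q.1.val = 0
    · simp only [hp, hq, and_true, true_and, if_true]
      rw [Finset.sum_eq_single (⟨0, hk⟩ : Fin k)]
      · simp [Matrix.mul_apply]
      · intro r1 _ hr1
        have hr1' : ¬ r1.val = 0 := fun h => hr1 (Fin.ext h)
        simp only [hr1', false_and, if_false]
        apply Finset.sum_eq_zero
        intro r2 _
        have : p ≠ (r1, r2) := by
          intro h; rw [h] at hp; exact hr1' hp
        simp [this]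
      · simp
    · simp only [hp, hq, and_false, and_true, true_and, if_false]
      have hpq : p ≠ q := fun h => hq (h ▸ hp)
      rw [if_neg hpq]
      apply Finset.sum_eq_zero; intro r1 _
      apply Finset.sum_eq_zero; intro r2 _
      by_cases hr1 : r1.val = 0
      · have : (r1, r2) ≠ q := fun h => hq (h ▸ hr1)
        simp [hr1, this]
      · have : p ≠ (r1, r2) := fun h => by rw [h] at hp; exact hr1 hp
        simp [hr1, this]
  · simp only [hp, false_and, if_false]
    rw [Finset.sum_eq_single p.1]
    · rw [Finset.sum_eq_single p.2]
      · simp [hp, Prod.mk.eta]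
      · intro r2 _ hr2
        have : p ≠ (p.1, r2) := by
          intro h
          exact hr2 ((congrArg Prod.snd h).symm)
        simp [hp, this]
      · simp
    · intro r1 _ hr1
      apply Finset.sum_eq_zero; intro r2 _
      have : p ≠ (r1, r2) := fun h => hr1 ((congrArg Prod.fst h).symm)
      simp [hp, this]
    · simp

lemma diagPI_det_ne_zero (n k : ℕ) (hk : 0 < k) (A : Matrix (Fin n) (Fin n) (Polynomial ℝ))
    (hA : A.det ≠ 0) : (diagPI n k A).det ≠ 0 := by
  have h1 : diagPI n k A * diagPI n k A.adjugate = diagPI n k (A * A.adjugate) :=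
    diagPI_mul n k hk _ _
  rw [Matrix.mul_adjugate] at h1
  have h2 : diagPI n k (A.det • (1 : Matrix (Fin n) (Fin n) (Polynomial ℝ))) =
      Matrix.diagonal (fun p : Fin k × Fin n => if p.1.val = 0 then A.det else 1) := by
    apply Matrix.ext; intro p q
    simp only [diagPI, Matrix.of_apply, Matrix.diagonal_apply, Matrix.smul_apply,
      Matrix.one_apply, smul_ite, smul_eq_mul, mul_one, mul_zero, smul_zero]
    by_cases hpq : p = q
    · subst hpq
      by_cases hp : p.1.val = 0 <;> simp [hp]
    · rw [if_neg hpq]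
      by_cases hp : p.1.val = 0 <;> by_cases hq : q.1.val = 0
      · have h2 : p.2 ≠ q.2 := fun h => hpq (Prod.ext (Fin.ext (hp.trans hq.symm)) h)
        simp [hp, hq, h2, hpq]
      all_goals simp [hp, hq, hpq]
  have h3 : (diagPI n k A).det * (diagPI n k A.adjugate).det ≠ 0 := by
    rw [← Matrix.det_mul, h1, h2, Matrix.det_diagonal]
    exact Finset.prod_ne_zero_iff.mpr (fun p _ => by by_cases hp : p.1.val = 0 <;> simp [hp, hA])
  exact fun h => h3 (by rw [h, zero_mul])

theorem statement_4
    (n k : ℕ) (hn : 0 < n) (hk : 2 ≤ k)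
    (a b c : ℕ → ℝ) (ha : ∀ j, a j ≠ 0)
    (φ : ℕ → Polynomial ℝ) (hφ0 : φ 0 = 1)
    (hφ1 : C (a 0) * φ 1 = (X - C (b 0)) * φ 0)
    (hφrec : ∀ j, C (a (j + 1)) * φ (j + 2) =
      (X - C (b (j + 1))) * φ (j + 1) - C (c (j + 1)) * φ j)
    (Pm : ℕ → Matrix (Fin n) (Fin n) ℝ) (hPk : Pm k ≠ 0)
    (hreg : (matP n k φ Pm).det ≠ 0)
    (v : Fin k → ℝ) (B : Matrix (Fin k × Fin n) (Fin (k - 1) × Fin n) ℝ)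
    (hlin : IsLinearization n k (liftC (extCols n k v B) * FPhi n k a b c Pm)
      (matP n k φ Pm)) :
    (extCols n k v B).rank = k * n := by
  obtain ⟨U, V, ⟨cu, hcu, hU⟩, ⟨cv, hcv, hV⟩, hUV⟩ := hlin
  have hdet : (liftC (extCols n k v B) * FPhi n k a b c Pm).det ≠ 0 := by
    intro h
    have hd := congrArg Matrix.det hUV
    rw [Matrix.det_mul, Matrix.det_mul, h, mul_zero, zero_mul] at hd
    exact diagPI_det_ne_zero n k (by omega) _ hreg hd.symm
  have hE : (extCols n k v B).det ≠ 0 := by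
    intro h
    apply hdet
    rw [Matrix.det_mul]
    have hc : (liftC (extCols n k v B)).det = C ((extCols n k v B).det) :=
      (RingHom.map_det (Polynomial.C : ℝ →+* Polynomial ℝ) (extCols n k v B)).symm
    rw [hc, h, map_zero, zero_mul]
  have hu : IsUnit (extCols n k v B) :=
    (Matrix.isUnit_iff_isUnit_det _).mpr (isUnit_iff_ne_zero.mpr hE)
  rw [Matrix.rank_of_isUnit _ hu]
  simp [Fintype.card_prod]
end
end

section
/- Right eigenvector recovery from F_Φ^P: let P(λ) be regular. Then: (1) for every finite eigenvalue α ∈ ℂ of P (det P(α) = 0), a vector u ∈ ℂ^n satisfies P(α)u = 0 if and only if F_Φ^P(α)(Φ_k(α) ⊗ u) = 0; moreover every w ∈ ℂ^{kn} with F_Φ^P(α)w = 0 has the form w = Φ_k(α) ⊗ u for some u ∈ ℂ^n with P(α)u = 0. (2) A vector u ∈ ℂ^n satisfies (rev_k P)(0)u = 0 if and only if (rev₁ F_Φ^P)(0)(e₁ ⊗ u) = 0; moreover every w ∈ ℂ^{kn} with (rev₁ F_Φ^P)(0)w = 0 has the form w = e₁ ⊗ u for some u ∈ ℂ^n with (rev_k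 P)(0)u = 0. -/
open Polynomial Matrix

noncomputable section

lemma sum_val_eq {k : ℕ} (m : ℕ) (h : Fin k → ℂ) :
    (∑ j : Fin k, if (j : ℕ) = m then h j else 0) =
      if hm : m < k then h ⟨m, hm⟩ else 0 := by
  split
  · next hm =>
    rw [Finset.sum_eq_single (⟨m, hm⟩ : Fin k)]
    · simp
    · intro j _ hj
      rw [if_neg fun hv => hj (Fin.ext hv)]
    · simp
  · next hm =>
    rw [Finset.sum_eq_zero]
    intro j _
    rw [if_neg fun hv => hm (lt_of_eq_of_lt hv.symm j.isLt)]

lemma phi_deg (a b c : ℕ → ℝ) (ha : ∀ j, a j ≠ 0)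
    (φ : ℕ → Polynomial ℝ) (hφ0 : φ 0 = 1)
    (hφ1 : C (a 0) * φ 1 = (X - C (b 0)) * φ 0)
    (hφrec : ∀ j, C (a (j + 1)) * φ (j + 2) =
      (X - C (b (j + 1))) * φ (j + 1) - C (c (j + 1)) * φ j) :
    ∀ j, (φ j).natDegree ≤ j ∧ (φ j).coeff j ≠ 0 := by
  intro j
  induction j using Nat.strong_induction_on with
  | _ j ih =>
    match j with
    | 0 => simp [hφ0]
    | 1 =>
      rw [hφ0, mul_one] at hφ1
      constructor
      · have h1 : (C (a 0) * φ 1).natDegree = (φ 1).natDegree := by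
          rw [natDegree_C_mul (ha 0)]
        rw [hφ1, natDegree_X_sub_C] at h1
        omega
      · have h2 : (C (a 0) * φ 1).coeff 1 = (X - C (b 0)).coeff 1 := by rw [hφ1]
        rw [coeff_C_mul] at h2
        simp [coeff_X] at h2
        intro h
        rw [h, mul_zero] at h2
        exact one_ne_zero h2.symm
    | (j + 2) =>
      have ih1 := ih (j+1) (by omega)
      have ih0 := ih j (by omega)
      have d1 := ih1.1
      have d0 := ih0.1
      have z0 : (φ j).coeff (j+2) = 0 := coeff_eq_zero_of_natDegree_lt (by omega)
      have z1 : (φ (j+1)).coeff (j+2) = 0 := coeff_eq_zero_of_natDegree_lt (by omega)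
      constructor
      · have h1 : (φ (j+2)).natDegree = (C (a (j+1)) * φ (j+2)).natDegree := by
          rw [natDegree_C_mul (ha (j+1))]
        rw [h1, hφrec j]
        refine le_trans (natDegree_sub_le _ _) ?_
        refine max_le (le_trans (natDegree_mul_le) ?_) (le_trans (natDegree_mul_le) ?_)
        · rw [natDegree_X_sub_C]; omega
        · simp only [natDegree_C, zero_add]; omega
      · have h2 : (C (a (j+1)) * φ (j+2)).coeff (j+2)
            = ((X - C (b (j+1))) * φ (j + 1)).coeff (j+2) - (C (c (j+1)) * φ j).coeff (j+2) := by
          rw [hφrec j, coeff_sub]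
        simp only [coeff_C_mul, sub_mul, coeff_sub, coeff_X_mul, z0, z1,
          mul_zero, sub_zero] at h2
        intro h
        rw [h, mul_zero] at h2
        exact ih1.2 h2.symm
lemma rowM (n k : ℕ) (a b c : ℕ → ℝ) (Pm : ℕ → Matrix (Fin n) (Fin n) ℝ)
    (α : ℂ) (w : Fin k × Fin n → ℂ) (i : Fin k) (hi : 0 < i.val) (r : Fin n) :
    (evalC α (FPhi n k a b c Pm)).mulVec w (i, r)
      = -((a (k-1-i.val) : ℂ) * w (⟨i.val-1, by omega⟩, r))
        + (α - (b (k-1-i.val) : ℂ)) * w (i, r)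
        - (if h : i.val + 1 < k then (c (k-1-i.val) : ℂ) * w (⟨i.val+1, h⟩, r) else 0) := by
  have hi0 : ¬ (i.val = 0) := by omega
  simp only [Matrix.mulVec, dotProduct, Fintype.sum_prod_type]
  simp only [evalC, FPhi, Matrix.of_apply, if_neg hi0]
  simp only [_root_.map_mul, apply_ite (aeval α), map_neg, aeval_C, map_sub, aeval_X,
    _root_.map_one, _root_.map_zero, Complex.coe_algebraMap]
  have hs : ∀ (j : Fin k) (S : ℂ),
      (∑ s : Fin n, (S * if r = s then 1 else 0) * w (j, s)) = S * w (j, r) := by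
    intro j S
    simp [mul_ite, ite_mul, mul_one, mul_zero, zero_mul, Finset.sum_ite_eq]
  simp only [hs]
  have hsplit : ∀ j : Fin k,
      ((if (j:ℕ) + 1 = (i:ℕ) then -((a (k - 1 - i.val) : ℝ) : ℂ)
        else if (j:ℕ) = (i:ℕ) then α - ((b (k - 1 - i.val) : ℝ) : ℂ)
        else if (j:ℕ) = (i:ℕ) + 1 then -((c (k - 1 - i.val) : ℝ) : ℂ) else 0) * w (j, r)) =
      (if (j:ℕ) = (i:ℕ) - 1 then -(((a (k-1-i.val) : ℝ) : ℂ) * w (j, r)) else 0)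
      + (if (j:ℕ) = (i:ℕ) then (α - ((b (k-1-i.val) : ℝ) : ℂ)) * w (j, r) else 0)
      + (if (j:ℕ) = (i:ℕ) + 1 then -(((c (k-1-i.val) : ℝ) : ℂ) * w (j, r)) else 0) := by
    intro j
    split_ifs <;> first | omega | ring
  rw [Finset.sum_congr rfl (fun j _ => hsplit j)]
  rw [Finset.sum_add_distrib, Finset.sum_add_distrib, sum_val_eq, sum_val_eq, sum_val_eq]
  rw [dif_pos (show i.val - 1 < k by omega), dif_pos i.isLt]
  by_cases hik : i.val + 1 < k
  · rw [dif_pos hik, dif_pos hik, Fin.eta]; ring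
  · rw [dif_neg hik, dif_neg hik, Fin.eta]; ring
lemma top_sum (k : ℕ) (hk : 2 ≤ k) (aK bK cK α : ℂ) (haK : aK ≠ 0)
    (g x : ℕ → ℂ) (hrec : aK * x k = (α - bK) * x (k-1) - cK * x (k-2)) :
    (∑ j : Fin k, (if (j:ℕ) = 0 then (aK⁻¹ * (α - bK) * g k + g (k-1))
      else if (j:ℕ) = 1 then g (k-2) - cK / aK * g k
      else g (k-1-(j:ℕ))) * x (k-1-(j:ℕ)))
    = ∑ i ∈ Finset.range (k+1), g i * x i := by
  obtain ⟨k', rfl⟩ : ∃ k', k = k'+2 := ⟨k-2, by omega⟩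
  rw [show k'+2-1 = k'+1 by omega, show k'+2-2 = k' by omega] at hrec
  have hx2 : x (k'+2) = aK⁻¹ * ((α - bK) * x (k'+1) - cK * x k') := by
    field_simp
    linear_combination hrec
  rw [Fin.sum_univ_succ, Fin.sum_univ_succ]
  have hred : ∀ j : Fin k',
      (if ((j.succ.succ : Fin (k'+2)) : ℕ) = 0 then (aK⁻¹ * (α - bK) * g (k'+2) + g (k'+2-1))
      else if ((j.succ.succ : Fin (k'+2)) : ℕ) = 1 then g (k'+2-2) - cK / aK * g (k'+2)
      else g (k'+2-1-((j.succ.succ : Fin (k'+2)) : ℕ))) * x (k'+2-1-((j.succ.succ : Fin (k'+2)) : ℕ))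
      = g (k'-1-(j:ℕ)) * x (k'-1-(j:ℕ)) := by
    intro j
    have h2 : ((j.succ.succ : Fin (k'+2)) : ℕ) = (j:ℕ) + 2 := by simp [Fin.val_succ]
    rw [h2, if_neg (by omega), if_neg (by omega), show k'+2-1-((j:ℕ)+2) = k'-1-(j:ℕ) by omega]
  rw [Finset.sum_congr rfl (fun j _ => hred j)]
  rw [Fin.sum_univ_eq_sum_range (fun j => g (k'-1-j) * x (k'-1-j)) k']
  rw [Finset.sum_range_reflect (fun i => g i * x i) k']
  rw [show k'+2+1 = (k'+2)+1 from rfl, Finset.sum_range_succ, Finset.sum_range_succ,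
    Finset.sum_range_succ]
  simp only [Fin.val_zero, Fin.val_succ, Fin.val_zero]
  norm_num
  rw [hx2]
  field_simp
  ring
lemma rowTop (n k : ℕ) (hk : 2 ≤ k) (a b c : ℕ → ℝ) (ha : a (k-1) ≠ 0)
    (φ : ℕ → Polynomial ℝ) (Pm : ℕ → Matrix (Fin n) (Fin n) ℝ) (α : ℂ) (u : Fin n → ℂ)
    (hrec : ((a (k-1) : ℝ) : ℂ) * aeval α (φ k)
      = (α - ((b (k-1) : ℝ) : ℂ)) * aeval α (φ (k-1)) - ((c (k-1) : ℝ) : ℂ) * aeval α (φ (k-2)))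
    (r : Fin n) (h0 : 0 < k) :
    (evalC α (FPhi n k a b c Pm)).mulVec (fun p => aeval α (φ (k - 1 - p.1.val)) * u p.2)
        ((⟨0, h0⟩ : Fin k), r)
      = (evalC α (matP n k φ Pm)).mulVec u r := by
  simp only [Matrix.mulVec, dotProduct, Fintype.sum_prod_type]
  simp only [evalC, FPhi, matP, Matrix.of_apply, eq_self_iff_true, if_true]
  simp only [apply_ite (aeval α), _root_.map_add, _root_.map_mul, _root_.map_sub, map_sum,
    aeval_C, aeval_X, Complex.coe_algebraMap, Complex.ofReal_div, Complex.ofReal_inv]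
  rw [Finset.sum_comm]
  refine Finset.sum_congr rfl (fun s _ => ?_)
  have hfac : ∀ (j : Fin k) (E : ℂ), E * (aeval α (φ (k-1-(j:ℕ))) * u s)
      = (E * aeval α (φ (k-1-(j:ℕ)))) * u s := fun j E => by ring
  simp only [hfac]
  rw [← Finset.sum_mul]
  congr 1
  exact top_sum k hk _ _ _ α (Complex.ofReal_ne_zero.mpr ha)
    (fun i => ((Pm i r s : ℝ) : ℂ)) (fun i => aeval α (φ i)) hrec
lemma evalC_zero_rev {m m' : Type*} (d : ℕ) (L : Matrix m m' (Polynomial ℝ)) (p : m) (q : m') :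
    evalC (0:ℂ) (revMat d L) p q = algebraMap ℝ ℂ ((L p q).coeff d) := by
  simp only [evalC, revMat, Matrix.of_apply]
  rw [aeval_def, Polynomial.eval₂_at_zero, Polynomial.coeff_reflect,
    Polynomial.revAt_le (Nat.zero_le d), Nat.sub_zero]

lemma rowM2 (n k : ℕ) (a b c : ℕ → ℝ) (Pm : ℕ → Matrix (Fin n) (Fin n) ℝ)
    (w : Fin k × Fin n → ℂ) (i : Fin k) (hi : 0 < i.val) (r : Fin n) :
    (evalC (0:ℂ) (revMat 1 (FPhi n k a b c Pm))).mulVec w (i, r) = w (i, r) := by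
  have hi0 : ¬ (i.val = 0) := by omega
  simp only [Matrix.mulVec, dotProduct, Fintype.sum_prod_type]
  have hent : ∀ (j : Fin k) (s : Fin n),
      evalC (0:ℂ) (revMat 1 (FPhi n k a b c Pm)) (i, r) (j, s)
        = if (j:ℕ) = (i:ℕ) ∧ r = s then 1 else 0 := by
    intro j s
    rw [evalC_zero_rev]
    simp only [FPhi, Matrix.of_apply, if_neg hi0]
    split_ifs with h1 h2 h3 h4 h5 h6 <;>
      simp_all [coeff_mul, coeff_sub, coeff_X_one, coeff_C, coeff_neg] <;>
      omega
  simp only [hent, ite_mul, one_mul, zero_mul]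
  have h1 : ∀ x : Fin k, (∑ s : Fin n, if (x:ℕ) = (i:ℕ) ∧ r = s then w (x, s) else 0)
      = if (x:ℕ) = (i:ℕ) then w (x, r) else 0 := by
    intro x
    by_cases hx : (x:ℕ) = (i:ℕ)
    · simp [hx, Finset.sum_ite_eq]
    · simp [hx]
  simp only [h1]
  rw [sum_val_eq (i:ℕ) (fun x => w (x, r)), dif_pos i.isLt, Fin.eta]

lemma rowTop2 (n k : ℕ) (hk : 2 ≤ k) (a b c : ℕ → ℝ) (Pm : ℕ → Matrix (Fin n) (Fin n) ℝ)
    (w : Fin k × Fin n → ℂ) (r : Fin n) (h0 : 0 < k) :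
    (evalC (0:ℂ) (revMat 1 (FPhi n k a b c Pm))).mulVec w ((⟨0,h0⟩ : Fin k), r)
      = ((a (k-1) : ℝ) : ℂ)⁻¹ * ∑ s : Fin n, ((Pm k r s : ℝ) : ℂ) * w (⟨0,h0⟩, s) := by
  simp only [Matrix.mulVec, dotProduct, Fintype.sum_prod_type]
  have hent : ∀ (j : Fin k) (s : Fin n),
      evalC (0:ℂ) (revMat 1 (FPhi n k a b c Pm)) ((⟨0,h0⟩ : Fin k), r) (j, s)
        = if (j:ℕ) = 0 then ((a (k-1) : ℝ) : ℂ)⁻¹ * ((Pm k r s : ℝ) : ℂ) else 0 := by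
    intro j s
    rw [evalC_zero_rev]
    simp only [FPhi, Matrix.of_apply, Fin.val_mk, if_pos rfl]
    split_ifs with h1 h2 <;>
      simp [coeff_add, coeff_mul_C, coeff_C_mul, coeff_sub, coeff_X_one, coeff_C]
  simp only [hent, ite_mul, zero_mul]
  have h1 : ∀ j : Fin k, (∑ s : Fin n, if (j:ℕ) = 0 then ((a (k-1):ℝ):ℂ)⁻¹ * ((Pm k r s : ℝ):ℂ) * w (j, s) else 0)
      = if (j:ℕ) = 0 then ∑ s : Fin n, ((a (k-1):ℝ):ℂ)⁻¹ * (((Pm k r s : ℝ):ℂ) * w (j, s)) else 0 := by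
    intro j
    split_ifs <;> simp [mul_assoc]
  simp only [h1]
  rw [sum_val_eq 0 (fun j => ∑ s : Fin n, ((a (k-1):ℝ):ℂ)⁻¹ * (((Pm k r s : ℝ):ℂ) * w (j, s)))]
  rw [dif_pos h0, Finset.mul_sum]
lemma rowH (n k : ℕ) (φ : ℕ → Polynomial ℝ) (Pm : ℕ → Matrix (Fin n) (Fin n) ℝ)
    (hdeg : ∀ j, (φ j).natDegree ≤ j)
    (u : Fin n → ℂ) (r : Fin n) :
    (evalC (0:ℂ) (revMat k (matP n k φ Pm))).mulVec u r
      = (((φ k).coeff k : ℝ) : ℂ) * ∑ s : Fin n, ((Pm k r s : ℝ) : ℂ) * u s := by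
  simp only [Matrix.mulVec, dotProduct]
  have hent : ∀ s : Fin n, evalC (0:ℂ) (revMat k (matP n k φ Pm)) r s
      = ((Pm k r s : ℝ) : ℂ) * (((φ k).coeff k : ℝ) : ℂ) := by
    intro s
    rw [evalC_zero_rev]
    simp only [matP, Matrix.of_apply, Polynomial.finset_sum_coeff, coeff_C_mul]
    rw [Finset.sum_eq_single k]
    · rw [_root_.map_mul]; simp [Complex.coe_algebraMap]
    · intro i hi hik
      rw [coeff_eq_zero_of_natDegree_lt
        (lt_of_le_of_lt (hdeg i) (by simp at hi; omega)), mul_zero]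
    · intro h; simp at h
  simp only [hent]
  rw [Finset.mul_sum]
  exact Finset.sum_congr rfl (fun s _ => by ring)

set_option maxHeartbeats 2000000 in
theorem statement_8
    (n k : ℕ) (hn : 0 < n) (hk : 2 ≤ k)
    (a b c : ℕ → ℝ) (ha : ∀ j, a j ≠ 0)
    (φ : ℕ → Polynomial ℝ) (hφ0 : φ 0 = 1)
    (hφ1 : C (a 0) * φ 1 = (X - C (b 0)) * φ 0)
    (hφrec : ∀ j, C (a (j + 1)) * φ (j + 2) =
      (X - C (b (j + 1))) * φ (j + 1) - C (c (j + 1)) * φ j)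
    (Pm : ℕ → Matrix (Fin n) (Fin n) ℝ) (hPk : Pm k ≠ 0)
    (hreg : (matP n k φ Pm).det ≠ 0) :
    (∀ α : ℂ, (evalC α (matP n k φ Pm)).det = 0 →
      ((∀ u : Fin n → ℂ,
          (evalC α (matP n k φ Pm)).mulVec u = 0 ↔
            (evalC α (FPhi n k a b c Pm)).mulVec
              (fun p => aeval α (φ (k - 1 - p.1.val)) * u p.2) = 0) ∧
       (∀ w : Fin k × Fin n → ℂ, (evalC α (FPhi n k a b c Pm)).mulVec w = 0 →
          ∃ u : Fin n → ℂ, (evalC α (matP n k φ Pm)).mulVec u = 0 ∧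
            w = fun p => aeval α (φ (k - 1 - p.1.val)) * u p.2))) ∧
    ((∀ u : Fin n → ℂ,
        (evalC 0 (revMat k (matP n k φ Pm))).mulVec u = 0 ↔
          (evalC 0 (revMat 1 (FPhi n k a b c Pm))).mulVec
            (fun p => if p.1.val = 0 then u p.2 else 0) = 0) ∧
     (∀ w : Fin k × Fin n → ℂ, (evalC 0 (revMat 1 (FPhi n k a b c Pm))).mulVec w = 0 →
        ∃ u : Fin n → ℂ, (evalC 0 (revMat k (matP n k φ Pm))).mulVec u = 0 ∧
          w = fun p => if p.1.val = 0 then u p.2 else 0)) := by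
  have hdeg : ∀ j, (φ j).natDegree ≤ j := fun j => (phi_deg a b c ha φ hφ0 hφ1 hφrec j).1
  have hlc : (φ k).coeff k ≠ 0 := (phi_deg a b c ha φ hφ0 hφ1 hφrec k).2
  constructor
  · -- Part 1
    intro α _hdet
    have hx0 : aeval α (φ 0) = 1 := by simp [hφ0]
    have hx1 : ((a 0 : ℝ):ℂ) * aeval α (φ 1) = (α - ((b 0:ℝ):ℂ)) * aeval α (φ 0) := by
      have := congrArg (aeval α) hφ1
      simpa [Complex.coe_algebraMap] using this
    have hxr : ∀ j, ((a (j+1):ℝ):ℂ) * aeval α (φ (j+2))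
        = (α - ((b (j+1):ℝ):ℂ)) * aeval α (φ (j+1)) - ((c (j+1):ℝ):ℂ) * aeval α (φ j) := by
      intro j
      have := congrArg (aeval α) (hφrec j)
      simpa [Complex.coe_algebraMap] using this
    have hrectop : ((a (k-1):ℝ):ℂ) * aeval α (φ k)
        = (α - ((b (k-1):ℝ):ℂ)) * aeval α (φ (k-1)) - ((c (k-1):ℝ):ℂ) * aeval α (φ (k-2)) := by
      obtain ⟨k', hk'⟩ : ∃ k', k = k'+2 := ⟨k-2, by omega⟩
      subst hk'
      simpa [show k'+2-1 = k'+1 by omega, show k'+2-2 = k' by omega] using hxr k'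
    have hiff : ∀ u : Fin n → ℂ,
        (evalC α (matP n k φ Pm)).mulVec u = 0 ↔
          (evalC α (FPhi n k a b c Pm)).mulVec
            (fun p => aeval α (φ (k - 1 - p.1.val)) * u p.2) = 0 := by
      intro u
      have hMzero : ∀ (i : Fin k) (r : Fin n), 0 < i.val →
          (evalC α (FPhi n k a b c Pm)).mulVec
            (fun p => aeval α (φ (k - 1 - p.1.val)) * u p.2) (i, r) = 0 := by
        intro i r hi
        rw [rowM n k a b c Pm α (fun p => aeval α (φ (k - 1 - p.1.val)) * u p.2) i hi r]
        by_cases hik : i.val + 1 < k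
        · rw [dif_pos hik]
          rw [show k - 1 - (i.val - 1) = (k - 2 - i.val) + 2 by omega,
            show k - 1 - i.val = (k - 2 - i.val) + 1 by omega,
            show k - 1 - (i.val + 1) = k - 2 - i.val by omega]
          linear_combination (-(u r)) * hxr (k - 2 - i.val)
        · rw [dif_neg hik]
          rw [show k - 1 - (i.val - 1) = 1 by omega, show k - 1 - i.val = 0 by omega]
          linear_combination (-(u r)) * hx1
      constructor
      · intro h
        funext p
        obtain ⟨i, r⟩ := p
        by_cases hi0 : i.val = 0
        · have hieq : i = ⟨0, by omega⟩ := Fin.ext hi0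
          rw [hieq, Pi.zero_apply,
            rowTop n k hk a b c (ha _) φ Pm α u hrectop r (by omega)]
          exact congrFun h r
        · rw [Pi.zero_apply]
          exact hMzero i r (by omega)
      · intro h
        funext r
        rw [Pi.zero_apply, ← rowTop n k hk a b c (ha _) φ Pm α u hrectop r (by omega)]
        exact congrFun h (⟨0, by omega⟩, r)
    refine ⟨hiff, ?_⟩
    intro w hw
    set u : Fin n → ℂ := fun r => w (⟨k-1, by omega⟩, r) with hu
    have claim : ∀ j, j ≤ k - 1 → ∀ (h : k-1-j < k) (r : Fin n),
        w (⟨k-1-j, h⟩, r) = aeval α (φ j) * u r := by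
      intro j
      induction j using Nat.strong_induction_on with
      | _ j ih =>
        match j with
        | 0 =>
          intro _ h r
          rw [hx0, one_mul, hu]
          simp [Nat.sub_zero]
        | 1 =>
          intro hj h r
          have h1 := congrFun hw (⟨k-1, by omega⟩, r)
          rw [rowM n k a b c Pm α w ⟨k-1, by omega⟩ (by simp; omega) r, Pi.zero_apply] at h1
          simp only [dif_neg (show ¬ ((⟨k-1, by omega⟩ : Fin k).val + 1 < k) by simp; omega)] at h1
          rw [show k - 1 - (k-1) = 0 by omega] at h1
          -- h1 : -(↑(a 0) * w (⟨k-1-1, _⟩, r)) + (α - ↑(b 0)) * w (⟨k-1, _⟩, r) - 0 = 0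
          have hwk : w (⟨k-1, by omega⟩, r) = u r := by rw [hu]
          have key : ((a 0 : ℝ):ℂ) * w (⟨k-1-1, by omega⟩, r)
              = ((a 0 : ℝ):ℂ) * (aeval α (φ 1) * u r) := by
            rw [← mul_assoc, hx1, hx0, mul_one]
            linear_combination (-1 : ℂ) * h1 + (α - ((b 0:ℝ):ℂ)) * hwk
          exact mul_left_cancel₀ (Complex.ofReal_ne_zero.mpr (ha 0)) key
        | (j + 2) =>
          intro hj h r
          have hik : (k - 2 - j) + 1 < k := by omega
          have h1 := congrFun hw (⟨k-2-j, by omega⟩, r)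
          rw [rowM n k a b c Pm α w ⟨k-2-j, by omega⟩ (by simp; omega) r, Pi.zero_apply] at h1
          simp only [show ((⟨k-2-j, by omega⟩ : Fin k) : ℕ) = k - 2 - j from rfl] at h1
          rw [dif_pos hik] at h1
          rw [show k - 1 - (k-2-j) = j + 1 by omega] at h1
          have e2 : w (⟨k-2-j, by omega⟩, r) = aeval α (φ (j+1)) * u r := by
            have h2 := ih (j+1) (by omega) (by omega) (by omega) r
            have efin : (⟨k-1-(j+1), by omega⟩ : Fin k) = (⟨k-2-j, by omega⟩ : Fin k) := by
              rw [Fin.ext_iff]; simp; omega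
            rw [efin] at h2
            exact h2
          have e3 : w (⟨(k-2-j)+1, hik⟩, r) = aeval α (φ j) * u r := by
            have h3 := ih j (by omega) (by omega) (by omega) r
            have efin : (⟨k-1-j, by omega⟩ : Fin k) = (⟨(k-2-j)+1, hik⟩ : Fin k) := by
              rw [Fin.ext_iff]; simp; omega
            rw [efin] at h3
            exact h3
          have key : ((a (j+1) : ℝ):ℂ) * w (⟨k-2-j-1, by omega⟩, r)
              = ((a (j+1) : ℝ):ℂ) * (aeval α (φ (j+2)) * u r) := by
            rw [← mul_assoc, hxr j]
            linear_combination (-1 : ℂ) * h1 + (α - ((b (j+1):ℝ):ℂ)) * e2 - ((c (j+1):ℝ):ℂ) * e3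
          have hfin := mul_left_cancel₀ (Complex.ofReal_ne_zero.mpr (ha (j+1))) key
          have efin : (⟨k-1-(j+2), h⟩ : Fin k) = (⟨k-2-j-1, by omega⟩ : Fin k) := by
            rw [Fin.ext_iff]; simp; omega
          rw [efin]
          exact hfin
    have hwform : w = fun p => aeval α (φ (k - 1 - p.1.val)) * u p.2 := by
      funext p
      obtain ⟨i, r⟩ := p
      have hik2 := i.isLt
      have hcl := claim (k - 1 - i.val) (by omega) (by omega) r
      have efin : (⟨k-1-(k-1-i.val), by omega⟩ : Fin k) = i := by
        rw [Fin.ext_iff]; simp; omega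
      rw [efin] at hcl
      simpa using hcl
    refine ⟨u, ?_, hwform⟩
    exact (hiff u).mpr (hwform ▸ hw)
  · -- Part 2
    have haC : ((a (k-1) : ℝ):ℂ) ≠ 0 := Complex.ofReal_ne_zero.mpr (ha _)
    have hlcC : (((φ k).coeff k : ℝ):ℂ) ≠ 0 := Complex.ofReal_ne_zero.mpr hlc
    have hsum_iff : ∀ u : Fin n → ℂ,
        (evalC 0 (revMat k (matP n k φ Pm))).mulVec u = 0 ↔
          ∀ r, (∑ s : Fin n, ((Pm k r s : ℝ):ℂ) * u s) = 0 := by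
      intro u
      constructor
      · intro h r
        have := congrFun h r
        rw [rowH n k φ Pm hdeg u r, Pi.zero_apply] at this
        exact (mul_eq_zero.mp this).resolve_left hlcC
      · intro h
        funext r
        rw [rowH n k φ Pm hdeg u r, h r, mul_zero, Pi.zero_apply]
    constructor
    · intro u
      rw [hsum_iff u]
      constructor
      · intro h
        funext p
        obtain ⟨i, r⟩ := p
        by_cases hi0 : i.val = 0
        · have hieq : i = ⟨0, by omega⟩ := Fin.ext hi0
          rw [hieq, Pi.zero_apply,
            rowTop2 n k hk a b c Pm _ r (by omega)]
          rw [show (∑ s : Fin n, ((Pm k r s : ℝ):ℂ) *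
              (if ((⟨0, by omega⟩ : Fin k) : ℕ) = 0 then u s else 0)) =
              ∑ s : Fin n, ((Pm k r s : ℝ):ℂ) * u s from by simp]
          rw [h r, mul_zero]
        · rw [Pi.zero_apply, rowM2 n k a b c Pm _ i (by omega) r]
          simp [hi0]
      · intro h r
        have h0 := congrFun h (⟨0, by omega⟩, r)
        rw [rowTop2 n k hk a b c Pm _ r (by omega), Pi.zero_apply] at h0
        rw [show (∑ s : Fin n, ((Pm k r s : ℝ):ℂ) *
            (if ((⟨0, by omega⟩ : Fin k) : ℕ) = 0 then u s else 0)) =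
            ∑ s : Fin n, ((Pm k r s : ℝ):ℂ) * u s from by simp] at h0
        exact (mul_eq_zero.mp h0).resolve_left (inv_ne_zero haC)
    · intro w hw
      have hzero : ∀ (i : Fin k) (r : Fin n), 0 < i.val → w (i, r) = 0 := by
        intro i r hi
        have := congrFun hw (i, r)
        rwa [rowM2 n k a b c Pm w i hi r, Pi.zero_apply] at this
      refine ⟨fun r => w (⟨0, by omega⟩, r), ?_, ?_⟩
      · rw [hsum_iff]
        intro r
        have h0 := congrFun hw (⟨0, by omega⟩, r)
        rw [rowTop2 n k hk a b c Pm w r (by omega), Pi.zero_apply] at h0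
        exact (mul_eq_zero.mp h0).resolve_left (inv_ne_zero haC)
      · funext p
        obtain ⟨i, r⟩ := p
        by_cases hi0 : i.val = 0
        · have hieq : i = ⟨0, by omega⟩ := Fin.ext hi0
          rw [hieq]
          simp
        · rw [hzero i r (by omega)]
          simp [hi0]
end
end

section
/- Full rank characterization for singular polynomials: let P(λ) be singular and let ℒ(λ) = [v⊗I_n, B] · F_Φ^P(λ) ∈ 𝕄₁(P) with v ∈ ℝ^k and B ∈ ℝ^{kn×(k−1)n}. Then rank([v⊗I_n, B]) = kn if and only if u(λ)^T(v ⊗ I_n) ≠ 0 for every nonzero u(λ) ∈ N_ℓ(ℒ), the left nullspace of ℒ over the field ℝ(λ) of rational functions. -/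
open Polynomial Matrix

noncomputable section

lemma my_rank_eq_card_iff_det_ne_zero {m : Type*} [Fintype m] [DecidableEq m]
    (A : Matrix m m ℝ) : A.rank = Fintype.card m ↔ A.det ≠ 0 := by
  constructor
  · intro h hdet
    obtain ⟨x, hx, hAx⟩ := Matrix.exists_mulVec_eq_zero_iff.mpr hdet
    have hker : x ∈ LinearMap.ker A.mulVecLin := by
      simpa [Matrix.mulVecLin_apply] using hAx
    have hkb : LinearMap.ker A.mulVecLin ≠ ⊥ := by
      intro hb
      rw [hb, Submodule.mem_bot] at hker
      exact hx hker
    have h1 : Module.finrank ℝ (LinearMap.ker A.mulVecLin) ≠ 0 := by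
      intro h0
      exact hkb (Submodule.finrank_eq_zero.mp h0)
    have h2 := LinearMap.finrank_range_add_finrank_ker A.mulVecLin
    rw [Module.finrank_fintype_fun_eq_card] at h2
    have h3 : A.rank = Module.finrank ℝ (LinearMap.range A.mulVecLin) := rfl
    omega
  · intro h
    exact Matrix.rank_of_isUnit A ((Matrix.isUnit_iff_isUnit_det A).mpr
      (isUnit_iff_ne_zero.mpr h))

lemma my_nullvec (n k : ℕ) (hk : 0 < k) (a b c : ℕ → ℝ) (ha : ∀ j, a j ≠ 0)
    (Pm : ℕ → Matrix (Fin n) (Fin n) ℝ)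
    (w : Fin k × Fin n → RatFunc ℝ)
    (h0 : ∀ t, w (⟨0, hk⟩, t) = 0)
    (hw : Matrix.vecMul w (liftRat (FPhi n k a b c Pm)) = 0) : w = 0 := by
  have key : ∀ j, ∀ (hj : j < k), ∀ t, w (⟨j, hj⟩, t) = 0 := by
    intro j
    induction j using Nat.strong_induction_on with
    | _ j ih =>
      match j, ih with
      | 0, ih => intro hj t; exact h0 t
      | j+1, ih =>
        intro hj t
        have hjk : j < k := by omega
        have hcol := congrFun hw (⟨⟨j, hjk⟩, t⟩)
        simp only [Matrix.vecMul, dotProduct, Pi.zero_apply] at hcol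
        have hsum : ∑ p : Fin k × Fin n,
            w p * liftRat (FPhi n k a b c Pm) p (⟨⟨j, hjk⟩, t⟩)
            = w (⟨⟨j+1, hj⟩, t⟩) *
              liftRat (FPhi n k a b c Pm) (⟨⟨j+1, hj⟩, t⟩) (⟨⟨j, hjk⟩, t⟩) := by
          apply Fintype.sum_eq_single
          rintro ⟨⟨i, hi⟩, s⟩ hp
          by_cases hij : i ≤ j
          · rw [ih i (by omega) hi s, zero_mul]
          · have hFz : FPhi n k a b c Pm (⟨⟨i, hi⟩, s⟩) (⟨⟨j, hjk⟩, t⟩) = 0 := by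
              simp only [FPhi, Matrix.of_apply]
              rw [if_neg (show ¬ (i = 0) by omega)]
              by_cases his : i = j + 1
              · have hst : s ≠ t := by
                  intro hst
                  exact hp (by subst his hst; rfl)
                rw [if_neg hst, mul_zero]
              · rw [if_neg (show ¬ (j + 1 = i) by omega),
                    if_neg (show ¬ (j = i) by omega),
                    if_neg (show ¬ (j = i + 1) by omega), zero_mul]
            rw [liftRat, Matrix.map_apply, hFz, map_zero, mul_zero]
        rw [hsum] at hcol
        have hF : FPhi n k a b c Pm (⟨⟨j+1, hj⟩, t⟩) (⟨⟨j, hjk⟩, t⟩)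
            = -C (a (k - 1 - (j+1))) := by
          simp only [FPhi, Matrix.of_apply]
          rw [if_neg (show ¬ (j + 1 = 0) by omega)]
          simp
        rw [liftRat, Matrix.map_apply, hF] at hcol
        have hne : algebraMap (Polynomial ℝ) (RatFunc ℝ) (-C (a (k - 1 - (j+1)))) ≠ 0 :=
          RatFunc.algebraMap_ne_zero (by
            simp only [ne_eq, neg_eq_zero, Polynomial.C_eq_zero]
            exact ha _)
        rcases mul_eq_zero.mp hcol with h | h
        · exact h
        · exact absurd h hne
  funext p
  obtain ⟨⟨i, hi⟩, t⟩ := p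
  exact key i hi t

theorem statement_9
    (n k : ℕ) (hn : 0 < n) (hk : 2 ≤ k)
    (a b c : ℕ → ℝ) (ha : ∀ j, a j ≠ 0)
    (φ : ℕ → Polynomial ℝ) (hφ0 : φ 0 = 1)
    (hφ1 : C (a 0) * φ 1 = (X - C (b 0)) * φ 0)
    (hφrec : ∀ j, C (a (j + 1)) * φ (j + 2) =
      (X - C (b (j + 1))) * φ (j + 1) - C (c (j + 1)) * φ j)
    (Pm : ℕ → Matrix (Fin n) (Fin n) ℝ) (hPk : Pm k ≠ 0)
    (hsing : (matP n k φ Pm).det = 0)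
    (v : Fin k → ℝ) (B : Matrix (Fin k × Fin n) (Fin (k - 1) × Fin n) ℝ) :
    (extCols n k v B).rank = k * n ↔
      ∀ u : Fin k × Fin n → RatFunc ℝ, u ≠ 0 →
        Matrix.vecMul u (liftRat (liftC (extCols n k v B) * FPhi n k a b c Pm)) = 0 →
        Matrix.vecMul u (vKronRat n k v) ≠ 0 := by
  constructor
  · intro hrank u hu hL hvK
    have hcard : Fintype.card (Fin k × Fin n) = k * n := by
      simp [Fintype.card_prod]
    have hdet : (extCols n k v B).det ≠ 0 := by
      rw [← my_rank_eq_card_iff_det_ne_zero, hcard]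
      exact hrank
    set E := extCols n k v B with hE
    have hlift : liftRat (liftC E) = E.map (RatFunc.C : ℝ →+* RatFunc ℝ) := by
      funext p q
      simp [liftRat, liftC, RatFunc.algebraMap_C]
    set w := Matrix.vecMul u (liftRat (liftC E)) with hwdef
    have hFnull : Matrix.vecMul w (liftRat (FPhi n k a b c Pm)) = 0 := by
      rw [hwdef, Matrix.vecMul_vecMul]
      rw [show liftRat (liftC E) * liftRat (FPhi n k a b c Pm)
          = liftRat (liftC E * FPhi n k a b c Pm) from
        (Matrix.map_mul).symm]
      exact hL
    have hk0 : 0 < k := by omega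
    have h0 : ∀ t, w (⟨⟨0, hk0⟩, t⟩) = 0 := by
      intro t
      have hv0 := congrFun hvK t
      simp only [Matrix.vecMul, dotProduct, Pi.zero_apply] at hv0 ⊢
      rw [← hv0]
      apply Finset.sum_congr rfl
      intro p _
      congr 1
      simp only [liftRat, liftC, Matrix.map_apply, hE, extCols, vKronRat, Matrix.of_apply]
      rw [dif_pos trivial]
      split_ifs with h
      · exact RatFunc.algebraMap_C _
      · simp
    have hw0 : w = 0 := my_nullvec n k hk0 a b c ha Pm w h0 hFnull
    have hdet2 : (liftRat (liftC E)).det ≠ 0 := by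
      rw [hlift]
      rw [show E.map (⇑(RatFunc.C : ℝ →+* RatFunc ℝ))
          = (RatFunc.C : ℝ →+* RatFunc ℝ).mapMatrix E from rfl, ← RingHom.map_det]
      intro h
      exact hdet (RingHom.injective (RatFunc.C : ℝ →+* RatFunc ℝ) (by simpa using h))
    have : ¬ ∃ x ≠ 0, Matrix.vecMul x (liftRat (liftC E)) = 0 := by
      rw [Matrix.exists_vecMul_eq_zero_iff]
      exact hdet2
    exact this ⟨u, hu, hw0.symm ▸ hwdef.symm⟩
  · intro h
    by_contra hrank
    have hcard : Fintype.card (Fin k × Fin n) = k * n := by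
      simp [Fintype.card_prod]
    have hdet : (extCols n k v B).det = 0 := by
      by_contra hd
      exact hrank (hcard ▸ (my_rank_eq_card_iff_det_ne_zero _).mpr hd)
    obtain ⟨x, hx, hxE⟩ := Matrix.exists_vecMul_eq_zero_iff.mpr hdet
    set u : Fin k × Fin n → RatFunc ℝ := fun p => RatFunc.C (x p) with hu_def
    have hu : u ≠ 0 := by
      intro h0
      apply hx
      funext p
      have := congrFun h0 p
      simpa [hu_def, map_eq_zero_iff _ (RingHom.injective (RatFunc.C : ℝ →+* RatFunc ℝ))]
        using this
    have huE : Matrix.vecMul u (liftRat (liftC (extCols n k v B))) = 0 := by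
      funext q
      have hxq := congrFun hxE q
      simp only [Matrix.vecMul, dotProduct, Pi.zero_apply] at hxq ⊢
      rw [← map_zero (RatFunc.C : ℝ →+* RatFunc ℝ), ← hxq, map_sum]
      apply Finset.sum_congr rfl
      intro p _
      simp [hu_def, liftRat, liftC, RatFunc.algebraMap_C]
    have h1 : Matrix.vecMul u (liftRat (liftC (extCols n k v B) * FPhi n k a b c Pm)) = 0 := by
      rw [show liftRat (liftC (extCols n k v B) * FPhi n k a b c Pm)
          = liftRat (liftC (extCols n k v B)) * liftRat (FPhi n k a b c Pm) from
        Matrix.map_mul, ← Matrix.vecMul_vecMul, huE, Matrix.zero_vecMul]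
    have hk0 : 0 < k := by omega
    have h2 : Matrix.vecMul u (vKronRat n k v) = 0 := by
      funext t
      have := congrFun huE (⟨⟨0, hk0⟩, t⟩)
      simp only [Matrix.vecMul, dotProduct, Pi.zero_apply] at this ⊢
      rw [← this]
      apply Finset.sum_congr rfl
      intro p _
      congr 1
      simp only [liftRat, liftC, Matrix.map_apply, extCols, vKronRat, Matrix.of_apply]
      rw [dif_pos trivial]
      split_ifs with hpt
      · exact (RatFunc.algebraMap_C _).symm
      · simp
    exact h u hu h1 h2
end
end
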